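/- arXiv:2204.11694 — 11 statements merged into one kernel-verified Lean document; each statement's English description precedes it below -/
import Mathlib

section
/- If μ is a finitely additive probability measure on ω (i.e. on the power set of ω) that vanishes on points (μ({n}) = 0 for all n), then for every infinite set A ⊆ ω there exists an infinite subset B ⊆ A with μ(B) = 0. -/
/-!
Splitting an infinite set into two infinite pieces and keeping the lighter one, iteratively,
gives a decreasing sequence of infinite sets `S n ⊆ A` with `μ (S n) ≤ μ A / 2 ^ n`. A diagonal
set `B` meeting each `S n` in all but finitely many points is infinite, and since finite sets are
null, `μ B ≤ μ (S n)` for every `n`.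
-/

theorem Set.Infinite.exists_union_disjoint_infinite {α : Type*} {s : Set α} (hs : s.Infinite) :
    ∃ t u : Set α, t ∪ u = s ∧ Disjoint t u ∧ t.Infinite ∧ u.Infinite := by
  obtain ⟨t, u, rfl, hdisj, hcard⟩ := hs.exists_union_disjoint_cardinal_eq_of_infinite
  have htu : t.Finite ↔ u.Finite := by
    rw [← Cardinal.lt_aleph0_iff_set_finite, ← Cardinal.lt_aleph0_iff_set_finite, hcard]
  have ht : t.Infinite := fun ht => hs (ht.union (htu.mp ht))
  exact ⟨t, u, rfl, hdisj, ht, fun hu => ht (htu.mpr hu)⟩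

theorem Nat.exists_infinite_subset_forall_diff_finite {S : ℕ → Set ℕ} (hS : Antitone S)
    (hinf : ∀ n, (S n).Infinite) : ∃ B ⊆ S 0, B.Infinite ∧ ∀ n, (B \ S n).Finite := by
  choose b hbS hb using fun n => (hinf n).exists_gt n
  refine ⟨Set.range b, ?_, ?_, fun n => ?_⟩
  · rintro _ ⟨n, rfl⟩
    exact hS n.zero_le (hbS n)
  · refine Set.infinite_of_not_bddAbove fun ⟨m, hm⟩ => ?_
    exact (hb m).not_ge (hm ⟨m, rfl⟩)
  · refine ((Set.finite_Iio n).image b).subset ?_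
    rintro _ ⟨⟨k, rfl⟩, hk⟩
    exact ⟨k, not_le.mp fun hnk => hk (hS hnk (hbS k)), rfl⟩

section FinitelyAdditive

variable {α : Type*} {μ : Set α → ℝ}
  (hadd : ∀ A B : Set α, Disjoint A B → μ (A ∪ B) = μ A + μ B)
include hadd

theorem measure_empty_of_additive : μ ∅ = 0 := by
  simpa using hadd ∅ ∅ disjoint_bot_left

theorem measure_diff_add_of_additive {A B : Set α} (h : A ⊆ B) : μ (B \ A) + μ A = μ B := by
  rw [← hadd _ _ Set.disjoint_sdiff_left, Set.sdiff_union_of_subset h]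

theorem measure_eq_zero_of_finite (hpoints : ∀ a, μ {a} = 0) {A : Set α} (hA : A.Finite) :
    μ A = 0 := by
  induction A, hA using Set.Finite.induction_on with
  | empty => exact measure_empty_of_additive hadd
  | @insert a A ha _ ih =>
    rw [← Set.singleton_union, hadd _ _ (Set.disjoint_singleton_left.mpr ha), hpoints, ih, add_zero]

theorem exists_infinite_subset_measure_le_half {S : Set α} (hS : S.Infinite) :
    ∃ T ⊆ S, T.Infinite ∧ μ T ≤ μ S / 2 := by
  obtain ⟨T, U, rfl, hdisj, hT, hU⟩ := hS.exists_union_disjoint_infinite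
  rw [hadd T U hdisj]
  by_cases h : μ T ≤ μ U
  · exact ⟨T, Set.subset_union_left, hT, by linarith⟩
  · exact ⟨U, Set.subset_union_right, hU, by linarith⟩

theorem exists_antitone_infinite_measure_le_div_pow {A : Set α} (hA : A.Infinite) :
    ∃ S : ℕ → Set α, S 0 = A ∧ Antitone S ∧ (∀ n, (S n).Infinite) ∧ ∀ n, μ (S n) ≤ μ A / 2 ^ n := by
  choose F hFS hF hμF using
    fun S : {S : Set α // S.Infinite} => exists_infinite_subset_measure_le_half hadd S.2
  let seq : ℕ → {S : Set α // S.Infinite} := fun n => n.rec ⟨A, hA⟩ fun _ S => ⟨F S, hF S⟩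
  refine ⟨fun n => (seq n).1, rfl, antitone_nat_of_succ_le fun n => hFS _, fun n => (seq n).2,
    fun n => ?_⟩
  induction n with
  | zero => simp [seq]
  | succ n ih =>
    calc μ (seq (n + 1)).1 ≤ μ (seq n).1 / 2 := hμF (seq n)
      _ ≤ μ A / 2 ^ n / 2 := by gcongr
      _ = μ A / 2 ^ (n + 1) := by rw [pow_succ, div_div]

variable (hnonneg : ∀ A : Set α, 0 ≤ μ A)
include hnonneg

theorem monotone_of_additive : Monotone μ := fun A B h => by
  linarith [measure_diff_add_of_additive hadd h, hnonneg (B \ A)]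

theorem measure_union_le_of_additive (A B : Set α) : μ (A ∪ B) ≤ μ A + μ B := by
  rw [← Set.union_sdiff_self, hadd _ _ Set.disjoint_sdiff_right]
  linarith [monotone_of_additive hadd hnonneg (Set.sdiff_subset : B \ A ⊆ B)]

end FinitelyAdditive

theorem stmt0_general (μ : Set ℕ → ℝ)
    (hadd : ∀ A B : Set ℕ, Disjoint A B → μ (A ∪ B) = μ A + μ B)
    (hnonneg : ∀ A : Set ℕ, 0 ≤ μ A)
    (hpoints : ∀ n : ℕ, μ {n} = 0) :
    ∀ A : Set ℕ, A.Infinite → ∃ B ⊆ A, B.Infinite ∧ μ B = 0 := by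
  intro A hA
  obtain ⟨S, rfl, hS, hSinf, hμS⟩ := exists_antitone_infinite_measure_le_div_pow hadd hA
  obtain ⟨B, hBS, hB, hBdiff⟩ := Nat.exists_infinite_subset_forall_diff_finite hS hSinf
  refine ⟨B, hBS, hB, le_antisymm ?_ (hnonneg B)⟩
  have hμB : ∀ n, μ B ≤ μ (S 0) / 2 ^ n := fun n =>
    calc μ B ≤ μ (B \ S n ∪ S n) := monotone_of_additive hadd hnonneg (by simp)
      _ ≤ μ (B \ S n) + μ (S n) := measure_union_le_of_additive hadd hnonneg _ _
      _ = μ (S n) := by rw [measure_eq_zero_of_finite hadd hpoints (hBdiff n), zero_add]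
      _ ≤ μ (S 0) / 2 ^ n := hμS n
  exact ge_of_tendsto' (tendsto_const_nhds.div_atTop (tendsto_pow_atTop_atTop_of_one_lt one_lt_two))
    hμB

theorem stmt0 (μ : Set ℕ → ℝ)
    (hadd : ∀ A B : Set ℕ, Disjoint A B → μ (A ∪ B) = μ A + μ B)
    (hnonneg : ∀ A : Set ℕ, 0 ≤ μ A)
    (hprob : μ Set.univ = 1)
    (hpoints : ∀ n : ℕ, μ {n} = 0) :
    ∀ A : Set ℕ, A.Infinite → ∃ B ⊆ A, B.Infinite ∧ μ B = 0 :=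
  stmt0_general μ hadd hnonneg hpoints
end

section
/- Let μ be a finitely additive probability measure on ω vanishing on points. Then the following are equivalent: (1) for every ⊆-decreasing sequence (A_n) of subsets of ω there is a set A with A ⊆* A_n for all n (A \ A_n finite) and μ(A) = lim_n μ(A_n); (2) for every ⊆-increasing sequence (A_n) there is a set A with A_n ⊆* A for all n and μ(A) = lim_n μ(A_n); (3) for every sequence (A_n) of pairwise disjoint subsets of ω there is a set A with A_n ⊆* A for all n and μ(A) = Σ_n μ(A_n). -/
/-!
Complementation exchanges decreasing and increasing sequences, so (1) ⇔ (2). For (2) ⇔ (3), a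
disjoint sequence and the increasing sequence of its partial unions determine each other
(`partialSups` and `disjointed`); finite additivity turns the measures of the partial unions
into the partial sums of the series, which converges exactly when they do because the terms
are nonnegative.
-/

open Filter Set Function Topology

variable {α : Type*}

def HasAntitonePLimits (μ : Set α → ℝ) : Prop :=
  ∀ A : ℕ → Set α, (∀ n, A (n + 1) ⊆ A n) →
    ∃ B : Set α, (∀ n, (B \ A n).Finite) ∧ Tendsto (fun n => μ (A n)) atTop (𝓝 (μ B))

def HasMonotonePLimits (μ : Set α → ℝ) : Prop :=
  ∀ A : ℕ → Set α, (∀ n, A n ⊆ A (n + 1)) →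
    ∃ B : Set α, (∀ n, (A n \ B).Finite) ∧ Tendsto (fun n => μ (A n)) atTop (𝓝 (μ B))

def HasPSums (μ : Set α → ℝ) : Prop :=
  ∀ A : ℕ → Set α, Pairwise (Disjoint on A) →
    ∃ B : Set α, (∀ n, (A n \ B).Finite) ∧ HasSum (fun n => μ (A n)) (μ B)

section Additive

variable {μ : Set α → ℝ}

theorem additive_compl (hadd : ∀ A B : Set α, Disjoint A B → μ (A ∪ B) = μ A + μ B)
    (A : Set α) : μ Aᶜ = μ univ - μ A := by
  have h := hadd A Aᶜ disjoint_compl_right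
  rw [union_compl_self] at h
  linarith

theorem tendsto_additive_compl (hadd : ∀ A B : Set α, Disjoint A B → μ (A ∪ B) = μ A + μ B)
    {A : ℕ → Set α} {B : Set α} (h : Tendsto (fun n => μ (A n)) atTop (𝓝 (μ B))) :
    Tendsto (fun n => μ (A n)ᶜ) atTop (𝓝 (μ Bᶜ)) := by
  simp only [additive_compl hadd]
  exact tendsto_const_nhds.sub h

theorem additive_partialSups (hadd : ∀ A B : Set α, Disjoint A B → μ (A ∪ B) = μ A + μ B)
    {A : ℕ → Set α} (hA : Pairwise (Disjoint on A)) (n : ℕ) :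
    μ (partialSups A n) = ∑ k ∈ Finset.range (n + 1), μ (A k) := by
  induction n with
  | zero => simp
  | succ n ih =>
    have hdisj : Disjoint (partialSups A n) (A (n + 1)) :=
      disjoint_partialSups_left.2 fun k hk => hA (by omega)
    rw [← Order.succ_eq_add_one, partialSups_succ, Order.succ_eq_add_one,
      Finset.sum_range_succ _ (n + 1), ← ih]
    exact hadd _ _ hdisj

theorem hasSum_iff_tendsto_partialSups
    (hadd : ∀ A B : Set α, Disjoint A B → μ (A ∪ B) = μ A + μ B) (hnonneg : ∀ A, 0 ≤ μ A)
    {A : ℕ → Set α} (hA : Pairwise (Disjoint on A)) (a : ℝ) :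
    HasSum (fun n => μ (A n)) a ↔ Tendsto (fun n => μ (partialSups A n)) atTop (𝓝 a) := by
  simp only [hasSum_iff_tendsto_nat_of_nonneg (fun n => hnonneg (A n)),
    additive_partialSups hadd hA]
  exact (tendsto_add_atTop_iff_nat 1).symm

end Additive

theorem finite_partialSups_diff {ι : Type*} [Preorder ι] [LocallyFiniteOrderBot ι]
    {A : ι → Set α} {B : Set α} (h : ∀ i, (A i \ B).Finite) (i : ι) :
    (partialSups A i \ B).Finite :=
  (partialSups_iff_forall (fun S => (S \ B).Finite) (by simp [union_sdiff_distrib])).2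
    fun j _ => h j

section PMeasure

variable {μ : Set α → ℝ}

theorem hasAntitonePLimits_iff_hasMonotonePLimits
    (hadd : ∀ A B : Set α, Disjoint A B → μ (A ∪ B) = μ A + μ B) :
    HasAntitonePLimits μ ↔ HasMonotonePLimits μ := by
  constructor
  · intro h A hA
    obtain ⟨B, hfin, hlim⟩ := h (fun n => (A n)ᶜ) fun n => compl_subset_compl.2 (hA n)
    refine ⟨Bᶜ, fun n => ?_, by simpa using tendsto_additive_compl hadd hlim⟩
    rw [Set.sdiff_compl, inter_comm, ← Set.sdiff_compl]
    exact hfin n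
  · intro h A hA
    obtain ⟨B, hfin, hlim⟩ := h (fun n => (A n)ᶜ) fun n => compl_subset_compl.2 (hA n)
    refine ⟨Bᶜ, fun n => ?_, by simpa using tendsto_additive_compl hadd hlim⟩
    rw [sdiff_eq, inter_comm, ← sdiff_eq]
    exact hfin n

theorem HasMonotonePLimits.hasPSums (hadd : ∀ A B : Set α, Disjoint A B → μ (A ∪ B) = μ A + μ B)
    (hnonneg : ∀ A, 0 ≤ μ A) (h : HasMonotonePLimits μ) : HasPSums μ := by
  intro A hA
  obtain ⟨B, hfin, hlim⟩ := h (partialSups A) fun n => partialSups_monotone A n.le_succ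
  refine ⟨B, fun n => (hfin n).subset (sdiff_subset_sdiff_left (le_partialSups A n)), ?_⟩
  exact (hasSum_iff_tendsto_partialSups hadd hnonneg hA _).2 hlim

theorem HasPSums.hasMonotonePLimits (hadd : ∀ A B : Set α, Disjoint A B → μ (A ∪ B) = μ A + μ B)
    (hnonneg : ∀ A, 0 ≤ μ A) (h : HasPSums μ) : HasMonotonePLimits μ := by
  intro A hA
  have hpartial : ⇑(partialSups (disjointed A)) = A := by
    rw [partialSups_disjointed, (monotone_nat_of_le_succ hA).partialSups_eq]
  obtain ⟨B, hfin, hsum⟩ := h (disjointed A) (disjoint_disjointed A)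
  refine ⟨B, fun n => ?_, ?_⟩
  · simpa only [hpartial] using finite_partialSups_diff hfin n
  · simpa only [hpartial] using
      (hasSum_iff_tendsto_partialSups hadd hnonneg (disjoint_disjointed A) _).1 hsum

end PMeasure

theorem stmt2_general (μ : Set ℕ → ℝ)
    (hadd : ∀ A B : Set ℕ, Disjoint A B → μ (A ∪ B) = μ A + μ B)
    (hnonneg : ∀ A : Set ℕ, 0 ≤ μ A) :
    List.TFAE
      [ ∀ A : ℕ → Set ℕ, (∀ n, A (n + 1) ⊆ A n) →
          ∃ B : Set ℕ, (∀ n, (B \ A n).Finite) ∧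
            Filter.Tendsto (fun n => μ (A n)) Filter.atTop (nhds (μ B)),
        ∀ A : ℕ → Set ℕ, (∀ n, A n ⊆ A (n + 1)) →
          ∃ B : Set ℕ, (∀ n, (A n \ B).Finite) ∧
            Filter.Tendsto (fun n => μ (A n)) Filter.atTop (nhds (μ B)),
        ∀ A : ℕ → Set ℕ, Pairwise (Function.onFun Disjoint A) →
          ∃ B : Set ℕ, (∀ n, (A n \ B).Finite) ∧
            HasSum (fun n => μ (A n)) (μ B) ] := by
  tfae_have 1 ↔ 2 := hasAntitonePLimits_iff_hasMonotonePLimits hadd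
  tfae_have 2 → 3 := HasMonotonePLimits.hasPSums hadd hnonneg
  tfae_have 3 → 2 := HasPSums.hasMonotonePLimits hadd hnonneg
  tfae_finish

theorem stmt2 (μ : Set ℕ → ℝ)
    (hadd : ∀ A B : Set ℕ, Disjoint A B → μ (A ∪ B) = μ A + μ B)
    (hnonneg : ∀ A : Set ℕ, 0 ≤ μ A)
    (hprob : μ Set.univ = 1)
    (hpoints : ∀ n : ℕ, μ {n} = 0) :
    List.TFAE
      [ ∀ A : ℕ → Set ℕ, (∀ n, A (n + 1) ⊆ A n) →
          ∃ B : Set ℕ, (∀ n, (B \ A n).Finite) ∧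
            Filter.Tendsto (fun n => μ (A n)) Filter.atTop (nhds (μ B)),
        ∀ A : ℕ → Set ℕ, (∀ n, A n ⊆ A (n + 1)) →
          ∃ B : Set ℕ, (∀ n, (A n \ B).Finite) ∧
            Filter.Tendsto (fun n => μ (A n)) Filter.atTop (nhds (μ B)),
        ∀ A : ℕ → Set ℕ, Pairwise (Function.onFun Disjoint A) →
          ∃ B : Set ℕ, (∀ n, (A n \ B).Finite) ∧
            HasSum (fun n => μ (A n)) (μ B) ] :=
  stmt2_general μ hadd hnonneg
end

section
/- Let μ be a finitely additive probability measure on ω vanishing on points. If μ is not a P-measure, then there exists a ⊆-decreasing sequence (A_n) of subsets of ω and a real ε > 0 such that for every set A ⊆ ω that is a pseudointersection of (A_n) (i.e. A ⊆* A_n for all n), one has μ(A) < lim_{n→∞} μ(A_n) − ε. -/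
/-!
Let `L = lim μ(Aₙ)`. Every pseudointersection `B` of `(Aₙ)` has `μ B ≤ L`, because `B \ Aₙ` is finite
and `μ` vanishes on finite sets; since `μ` is not a P-measure, the inequality is strict. Interpolating
an `(ω,ω)`-pregap shows that the supremum of `μ` over pseudointersections is attained: given
pseudointersections `Bₖ`, the set `⋃ₖ (Bₖ ∩ Aₖ)` is again a pseudointersection and almost contains
every `Bₖ`. Hence that supremum lies strictly below `L`, and half the gap is the required `ε`.
-/

open Filter Topology

def IsPseudointersection {α : Type*} (B : Set α) (A : ℕ → Set α) : Prop :=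
  ∀ n, (B \ A n).Finite

theorem exists_isPseudointersection_forall_finite_diff {α : Type*} {A : ℕ → Set α}
    (hA : Antitone A) {B : ℕ → Set α} (hB : ∀ k, IsPseudointersection (B k) A) :
    ∃ D, IsPseudointersection D A ∧ ∀ k, (B k \ D).Finite := by
  refine ⟨⋃ k, B k ∩ A k, fun n => ?_, fun k => ?_⟩
  · refine ((Finset.range n).finite_toSet.biUnion fun k _ => hB k n).subset ?_
    rintro x ⟨hx, hxn⟩
    obtain ⟨k, hxk, hxAk⟩ := Set.mem_iUnion.1 hx
    have hkn : k < n := lt_of_not_ge fun hnk => hxn (hA hnk hxAk)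
    exact Set.mem_biUnion (Finset.mem_coe.2 (Finset.mem_range.2 hkn)) ⟨hxk, hxn⟩
  · refine (hB k k).subset fun x ⟨hxk, hxD⟩ => ⟨hxk, fun hxAk => hxD ?_⟩
    exact Set.mem_iUnion.2 ⟨k, hxk, hxAk⟩

section FinitelyAdditive

variable {α : Type*} {μ : Set α → ℝ}

theorem apply_empty_of_additive (hadd : ∀ A B : Set α, Disjoint A B → μ (A ∪ B) = μ A + μ B) :
    μ ∅ = 0 := by
  have h := hadd ∅ ∅ disjoint_bot_left
  rw [Set.union_empty] at h
  linarith

theorem apply_eq_zero_of_finite (hadd : ∀ A B : Set α, Disjoint A B → μ (A ∪ B) = μ A + μ B)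
    (hpoints : ∀ a, μ {a} = 0) {X : Set α} (hX : X.Finite) : μ X = 0 := by
  induction X, hX using Set.Finite.induction_on with
  | empty => exact apply_empty_of_additive hadd
  | @insert a s has _ ih =>
    rw [Set.insert_eq, hadd _ _ (Set.disjoint_singleton_left.2 has), hpoints, ih, add_zero]

theorem monotone_of_additive_s4 (hadd : ∀ A B : Set α, Disjoint A B → μ (A ∪ B) = μ A + μ B)
    (hnonneg : ∀ A, 0 ≤ μ A) : Monotone μ := by
  intro X Y hXY
  have h := hadd X (Y \ X) disjoint_sdiff_self_right
  rw [Set.union_sdiff_cancel hXY] at h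
  linarith [hnonneg (Y \ X)]

theorem apply_le_of_finite_diff
    (hadd : ∀ A B : Set α, Disjoint A B → μ (A ∪ B) = μ A + μ B) (hnonneg : ∀ A, 0 ≤ μ A)
    (hpoints : ∀ a, μ {a} = 0)
    {B D : Set α} (hBD : (B \ D).Finite) : μ B ≤ μ D := by
  calc μ B ≤ μ (D ∪ B) := monotone_of_additive_s4 hadd hnonneg Set.subset_union_right
    _ = μ D + μ (B \ D) := by
      rw [← hadd _ _ disjoint_sdiff_self_right, Set.union_sdiff_self]
    _ = μ D := by rw [apply_eq_zero_of_finite hadd hpoints hBD, add_zero]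

end FinitelyAdditive

theorem exists_isPseudointersection_forall_apply_le {α : Type*} {μ : Set α → ℝ} {A : ℕ → Set α}
    (hA : Antitone A) (hμ : ∀ B D : Set α, (B \ D).Finite → μ B ≤ μ D) {c : ℝ}
    (hc : ∀ B, IsPseudointersection B A → μ B ≤ c) :
    ∃ D, IsPseudointersection D A ∧ ∀ B, IsPseudointersection B A → μ B ≤ μ D := by
  set S := μ '' {B | IsPseudointersection B A}
  have hne : S.Nonempty := ⟨μ ∅, ∅, fun n => by simp, rfl⟩
  have hbdd : BddAbove S := ⟨c, by rintro _ ⟨B, hB, rfl⟩; exact hc B hB⟩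
  obtain ⟨u, -, hu, huS⟩ := exists_seq_tendsto_sSup hne hbdd
  choose B hB hBu using huS
  obtain ⟨D, hD, hBD⟩ := exists_isPseudointersection_forall_finite_diff hA hB
  have hsup : sSup S ≤ μ D :=
    le_of_tendsto' hu fun k => hBu k ▸ hμ _ _ (hBD k)
  exact ⟨D, hD, fun B' hB' => (le_csSup hbdd ⟨B', hB', rfl⟩).trans hsup⟩

theorem stmt4_general (μ : Set ℕ → ℝ)
    (hadd : ∀ A B : Set ℕ, Disjoint A B → μ (A ∪ B) = μ A + μ B)
    (hnonneg : ∀ A : Set ℕ, 0 ≤ μ A)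
    (hpoints : ∀ n : ℕ, μ {n} = 0)
    (hnotP : ¬ ∀ A : ℕ → Set ℕ, (∀ n, A (n + 1) ⊆ A n) →
      ∃ B : Set ℕ, (∀ n, (B \ A n).Finite) ∧
        Filter.Tendsto (fun n => μ (A n)) Filter.atTop (nhds (μ B))) :
    ∃ (A : ℕ → Set ℕ) (ε L : ℝ), 0 < ε ∧ (∀ n, A (n + 1) ⊆ A n) ∧
      Filter.Tendsto (fun n => μ (A n)) Filter.atTop (nhds L) ∧
      ∀ B : Set ℕ, (∀ n, (B \ A n).Finite) → μ B < L - ε := by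
  push Not at hnotP
  obtain ⟨A, hdec, hnotLim⟩ := hnotP
  have hA : Antitone A := antitone_nat_of_succ_le hdec
  have hμ : ∀ B D : Set ℕ, (B \ D).Finite → μ B ≤ μ D :=
    fun _ _ => apply_le_of_finite_diff hadd hnonneg hpoints
  set L := ⨅ n, μ (A n)
  have hL : Tendsto (fun n => μ (A n)) atTop (𝓝 L) :=
    tendsto_atTop_ciInf ((monotone_of_additive_s4 hadd hnonneg).comp_antitone hA)
      ⟨0, by rintro _ ⟨n, rfl⟩; exact hnonneg _⟩
  have hle : ∀ B, IsPseudointersection B A → μ B ≤ L :=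
    fun B hB => le_ciInf fun n => hμ _ _ (hB n)
  obtain ⟨D, hD, hDmax⟩ := exists_isPseudointersection_forall_apply_le hA hμ hle
  have hDL : μ D < L := (hle D hD).lt_of_ne fun h => hnotLim D hD (h ▸ hL)
  refine ⟨A, (L - μ D) / 2, L, by linarith, hdec, hL, fun B hB => ?_⟩
  linarith [hDmax B hB]

theorem stmt4 (μ : Set ℕ → ℝ)
    (hadd : ∀ A B : Set ℕ, Disjoint A B → μ (A ∪ B) = μ A + μ B)
    (hnonneg : ∀ A : Set ℕ, 0 ≤ μ A)
    (hprob : μ Set.univ = 1)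
    (hpoints : ∀ n : ℕ, μ {n} = 0)
    (hnotP : ¬ ∀ A : ℕ → Set ℕ, (∀ n, A (n + 1) ⊆ A n) →
      ∃ B : Set ℕ, (∀ n, (B \ A n).Finite) ∧
        Filter.Tendsto (fun n => μ (A n)) Filter.atTop (nhds (μ B))) :
    ∃ (A : ℕ → Set ℕ) (ε L : ℝ), 0 < ε ∧ (∀ n, A (n + 1) ⊆ A n) ∧
      Filter.Tendsto (fun n => μ (A n)) Filter.atTop (nhds L) ∧
      ∀ B : Set ℕ, (∀ n, (B \ A n).Finite) → μ B < L - ε :=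
  stmt4_general μ hadd hnonneg hpoints hnotP
end

section
/- Let μ be a finitely additive probability measure on ω that is non-atomic, meaning: for every ε > 0 there is a finite partition of ω into sets each of μ-measure at most ε. Then for every P-point ultrafilter U on ω there exists N ∈ U with μ(N) = 0. -/
/-!
Non-atomicity puts, for every `ε > 0`, a set of measure at most `ε` into any ultrafilter: one
piece of a finite partition into small sets must belong to it. Applied to principal ultrafilters
this makes points, hence finite sets, null. For a P-point `U`, choose `A n ∈ U` of measure at
most `1 / (n + 1)` and a pseudointersection `B ∈ U`; since `B \ A n` is finite and null,
`μ B ≤ μ (A n)` for every `n`, so `μ B = 0`.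
-/

open Set

lemma measure_empty_of_additive_s6 {μ : Set ℕ → ℝ}
    (hadd : ∀ A B : Set ℕ, Disjoint A B → μ (A ∪ B) = μ A + μ B) : μ ∅ = 0 := by
  have h := hadd ∅ ∅ (disjoint_empty _)
  rw [union_empty] at h
  linarith

lemma measure_mono_of_additive {μ : Set ℕ → ℝ}
    (hadd : ∀ A B : Set ℕ, Disjoint A B → μ (A ∪ B) = μ A + μ B)
    (hnonneg : ∀ A : Set ℕ, 0 ≤ μ A) {A B : Set ℕ} (hAB : A ⊆ B) : μ A ≤ μ B := by
  have h := hadd A (B \ A) disjoint_sdiff_right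
  rw [union_sdiff_cancel hAB] at h
  linarith [hnonneg (B \ A)]

lemma Ultrafilter.exists_mem_of_iUnion_eq_univ {α ι : Type*} [Finite ι] (F : Ultrafilter α)
    {P : ι → Set α} (hP : ⋃ i, P i = univ) : ∃ i, P i ∈ F := by
  have hPF : (⋃ i ∈ (univ : Set ι), P i) ∈ F := by
    rw [biUnion_univ, hP]
    exact Filter.univ_mem
  obtain ⟨i, -, hi⟩ := (Ultrafilter.finite_biUnion_mem_iff finite_univ).mp hPF
  exact ⟨i, hi⟩

lemma measure_singleton_of_forall_ultrafilter {μ : Set ℕ → ℝ}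
    (hadd : ∀ A B : Set ℕ, Disjoint A B → μ (A ∪ B) = μ A + μ B)
    (hnonneg : ∀ A : Set ℕ, 0 ≤ μ A)
    (hsmall : ∀ (F : Ultrafilter ℕ) (ε : ℝ), 0 < ε → ∃ A ∈ F, μ A ≤ ε)
    (x : ℕ) : μ {x} = 0 := by
  refine le_antisymm (le_of_forall_pos_le_add fun ε hε => ?_) (hnonneg _)
  obtain ⟨A, hAx, hA⟩ := hsmall (pure x) ε hε
  have hxA : {x} ⊆ A := singleton_subset_iff.mpr (Ultrafilter.mem_pure.mp hAx)
  linarith [measure_mono_of_additive hadd hnonneg hxA]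

lemma measure_finite_of_singleton {μ : Set ℕ → ℝ}
    (hadd : ∀ A B : Set ℕ, Disjoint A B → μ (A ∪ B) = μ A + μ B)
    (hsing : ∀ x, μ {x} = 0) {A : Set ℕ} (hA : A.Finite) : μ A = 0 := by
  induction A, hA using Set.Finite.induction_on with
  | empty => exact measure_empty_of_additive_s6 hadd
  | @insert a s has _ ih =>
    rw [← singleton_union, hadd _ _ (disjoint_singleton_left.mpr has), hsing, ih, add_zero]

lemma measure_le_of_diff_finite {μ : Set ℕ → ℝ}
    (hadd : ∀ A B : Set ℕ, Disjoint A B → μ (A ∪ B) = μ A + μ B)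
    (hnonneg : ∀ A : Set ℕ, 0 ≤ μ A) (hsing : ∀ x, μ {x} = 0)
    {A B : Set ℕ} (hBA : (B \ A).Finite) : μ B ≤ μ A := by
  have hB : B ⊆ A ∪ (B \ A) := by simp
  have h := measure_mono_of_additive hadd hnonneg hB
  rwa [hadd _ _ disjoint_sdiff_right, measure_finite_of_singleton hadd hsing hBA, add_zero] at h

theorem stmt6_general (μ : Set ℕ → ℝ)
    (hadd : ∀ A B : Set ℕ, Disjoint A B → μ (A ∪ B) = μ A + μ B)
    (hnonneg : ∀ A : Set ℕ, 0 ≤ μ A)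
    (hna : ∀ ε : ℝ, 0 < ε → ∃ (N : ℕ) (P : Fin N → Set ℕ),
      (⋃ i, P i) = Set.univ ∧ Pairwise (Function.onFun Disjoint P) ∧ ∀ i, μ (P i) ≤ ε)
    (U : Ultrafilter ℕ)
    (hpp : ∀ A : ℕ → Set ℕ, (∀ n, A n ∈ U) → ∃ B ∈ U, ∀ n, (B \ A n).Finite) :
    ∃ N ∈ U, μ N = 0 := by
  have hsmall : ∀ (F : Ultrafilter ℕ) (ε : ℝ), 0 < ε → ∃ A ∈ F, μ A ≤ ε := by
    intro F ε hε
    obtain ⟨N, P, hcov, -, hP⟩ := hna ε hε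
    obtain ⟨i, hi⟩ := F.exists_mem_of_iUnion_eq_univ hcov
    exact ⟨P i, hi, hP i⟩
  have hsing := measure_singleton_of_forall_ultrafilter hadd hnonneg hsmall
  choose A hAU hA using fun n : ℕ => hsmall U _ (Nat.one_div_pos_of_nat (n := n))
  obtain ⟨B, hBU, hBA⟩ := hpp A hAU
  refine ⟨B, hBU, le_antisymm (le_of_forall_pos_le_add fun ε hε => ?_) (hnonneg B)⟩
  obtain ⟨n, hn⟩ := exists_nat_one_div_lt hε
  linarith [measure_le_of_diff_finite hadd hnonneg hsing (hBA n), hA n]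

theorem stmt6 (μ : Set ℕ → ℝ)
    (hadd : ∀ A B : Set ℕ, Disjoint A B → μ (A ∪ B) = μ A + μ B)
    (hnonneg : ∀ A : Set ℕ, 0 ≤ μ A)
    (hprob : μ Set.univ = 1)
    (hna : ∀ ε : ℝ, 0 < ε → ∃ (N : ℕ) (P : Fin N → Set ℕ),
      (⋃ i, P i) = Set.univ ∧ Pairwise (Function.onFun Disjoint P) ∧ ∀ i, μ (P i) ≤ ε)
    (U : Ultrafilter ℕ) (hfree : ∀ A : Set ℕ, A.Finite → A ∉ U)
    (hpp : ∀ A : ℕ → Set ℕ, (∀ n, A n ∈ U) → ∃ B ∈ U, ∀ n, (B \ A n).Finite) :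
    ∃ N ∈ U, μ N = 0 :=
  stmt6_general μ hadd hnonneg hna U hpp
end

section
/- Let U be a P-point ultrafilter on ω, let (Ω, Σ, λ) be a probability measure space, and define ν on sequences M : ω → Σ by ν(M) = lim_{i→U} λ(M(i)) (the ultrafilter limit). Then for every sequence (M_n) of functions ω → Σ with M_{n+1}(k) ⊆ M_n(k) for all n, k, there exists M : ω → Σ such that (1) for every n, M(k) ⊆ M_n(k) for all but finitely many k, and (2) ν(M) = lim_{n→∞} ν(M_n). -/
/-!
Choose `B ∈ U` almost contained in every set `A n = {k | |λ(M n k) - ν n| < 1/(n+1)}` (the P-point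
property). For `k ∈ B` let `g k` be the largest `n ≤ k` with `k ∈ A 0 ∩ ⋯ ∩ A n`, and `g k = k`
otherwise. Since `B \ A m` is finite, `g k → ∞`, and `N k = M (g k) k` is the diagonal sequence:
its `U`-limit is `lim ν n`, and it is eventually inside each `M n` because the `M n` decrease.
-/

open MeasureTheory Filter Topology

section PPoint

variable {U : Ultrafilter ℕ}

theorem Ultrafilter.le_atTop_of_forall_finite_notMem (hfree : ∀ A : Set ℕ, A.Finite → A ∉ U) :
    (U : Filter ℕ) ≤ atTop :=
  Nat.cofinite_eq_atTop ▸ le_cofinite_iff_compl_singleton_mem.2 fun x =>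
    U.compl_mem_iff_notMem.2 (hfree _ (Set.finite_singleton x))

theorem Ultrafilter.exists_tendsto_atTop_eventually_mem_of_pPoint
    (hpp : ∀ A : ℕ → Set ℕ, (∀ n, A n ∈ U) → ∃ B ∈ U, ∀ n, (B \ A n).Finite)
    (A : ℕ → Set ℕ) (hA : ∀ n, A n ∈ U) :
    ∃ g : ℕ → ℕ, Tendsto g atTop atTop ∧ ∀ᶠ k in (U : Filter ℕ), k ∈ A (g k) := by
  classical
  obtain ⟨B, hBU, hBA⟩ := hpp A hA
  let P : ℕ → ℕ → Prop := fun k n => ∀ m ≤ n, k ∈ A m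
  let g : ℕ → ℕ := fun k => if k ∈ B then Nat.findGreatest (P k) k else k
  have hB_almost_sub : ∀ n, ∀ᶠ k in atTop, k ∈ B → P k n := fun n => by
    have : ∀ᶠ k in atTop, ∀ m ∈ Set.Iic n, k ∈ B → k ∈ A m :=
      (eventually_all_finite (Set.finite_Iic n)).2 fun m _ =>
        (Nat.cofinite_eq_atTop ▸ (hBA m).eventually_cofinite_notMem).mono
          fun k hk hkB => by_contra fun hkA => hk ⟨hkB, hkA⟩
    exact this.mono fun k hk hkB m hm => hk m hm hkB
  refine ⟨g, tendsto_atTop.2 fun n => ?_, ?_⟩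
  · filter_upwards [hB_almost_sub n, eventually_ge_atTop n] with k hkP hnk
    by_cases hkB : k ∈ B
    · simpa only [g, if_pos hkB] using Nat.le_findGreatest hnk (hkP hkB)
    · simpa only [g, if_neg hkB] using hnk
  · filter_upwards [hBU, hA 0] with k hkB hk0
    have hP0 : P k 0 := fun m hm => Nat.le_zero.1 hm ▸ hk0
    simp only [g, if_pos hkB]
    exact Nat.findGreatest_spec (Nat.zero_le k) hP0 _ le_rfl

theorem Ultrafilter.exists_tendsto_diag_of_pPoint {α : Type*} [PseudoMetricSpace α]
    (hfree : ∀ A : Set ℕ, A.Finite → A ∉ U)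
    (hpp : ∀ A : ℕ → Set ℕ, (∀ n, A n ∈ U) → ∃ B ∈ U, ∀ n, (B \ A n).Finite)
    (f : ℕ → ℕ → α) (ν : ℕ → α) (hν : ∀ n, Tendsto (f n) U (𝓝 (ν n)))
    (r : α) (hr : Tendsto ν atTop (𝓝 r)) :
    ∃ g : ℕ → ℕ, Tendsto g atTop atTop ∧ Tendsto (fun k => f (g k) k) U (𝓝 r) := by
  obtain ⟨g, hg, hgA⟩ := exists_tendsto_atTop_eventually_mem_of_pPoint hpp
    (fun n => {k | dist (f n k) (ν n) < 1 / (n + 1)})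
    (fun n => hν n (Metric.ball_mem_nhds _ Nat.one_div_pos_of_nat))
  have hgU : Tendsto g U atTop := hg.mono_left (le_atTop_of_forall_finite_notMem hfree)
  refine ⟨g, hg, tendsto_of_tendsto_of_dist (hr.comp hgU) ?_⟩
  refine squeeze_zero' (Eventually.of_forall fun _ => dist_nonneg) ?_
    (tendsto_one_div_add_atTop_nhds_zero_nat.comp hgU)
  filter_upwards [hgA] with k hk
  exact (dist_comm _ _).trans_le (le_of_lt hk)

end PPoint

theorem stmt7_general {Ω : Type*} [MeasurableSpace Ω] (lam : Measure Ω)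
    (U : Ultrafilter ℕ) (hfree : ∀ A : Set ℕ, A.Finite → A ∉ U)
    (hpp : ∀ A : ℕ → Set ℕ, (∀ n, A n ∈ U) → ∃ B ∈ U, ∀ n, (B \ A n).Finite)
    (M : ℕ → ℕ → Set Ω) (hmeas : ∀ n k, MeasurableSet (M n k))
    (hdec : ∀ n k, M (n + 1) k ⊆ M n k)
    (ν : ℕ → ℝ)
    (hν : ∀ n, Filter.Tendsto (fun i => (lam (M n i)).toReal) (U : Filter ℕ) (nhds (ν n)))
    (r : ℝ) (hr : Filter.Tendsto ν Filter.atTop (nhds r)) :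
    ∃ N : ℕ → Set Ω, (∀ k, MeasurableSet (N k)) ∧
      (∀ n, ∀ᶠ k in Filter.atTop, N k ⊆ M n k) ∧
      Filter.Tendsto (fun i => (lam (N i)).toReal) (U : Filter ℕ) (nhds r) := by
  obtain ⟨g, hg, hlim⟩ := U.exists_tendsto_diag_of_pPoint hfree hpp
    (fun n i => (lam (M n i)).toReal) ν hν r hr
  refine ⟨fun k => M (g k) k, fun k => hmeas _ _, fun n => ?_, hlim⟩
  filter_upwards [tendsto_atTop.1 hg n] with k hk
  exact antitone_nat_of_succ_le (f := fun m => M m k) (fun m => hdec m k) hk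

theorem stmt7 {Ω : Type*} [MeasurableSpace Ω] (lam : Measure Ω)
    [IsProbabilityMeasure lam]
    (U : Ultrafilter ℕ) (hfree : ∀ A : Set ℕ, A.Finite → A ∉ U)
    (hpp : ∀ A : ℕ → Set ℕ, (∀ n, A n ∈ U) → ∃ B ∈ U, ∀ n, (B \ A n).Finite)
    (M : ℕ → ℕ → Set Ω) (hmeas : ∀ n k, MeasurableSet (M n k))
    (hdec : ∀ n k, M (n + 1) k ⊆ M n k)
    (ν : ℕ → ℝ)
    (hν : ∀ n, Filter.Tendsto (fun i => (lam (M n i)).toReal) (U : Filter ℕ) (nhds (ν n)))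
    (r : ℝ) (hr : Filter.Tendsto ν Filter.atTop (nhds r)) :
    ∃ N : ℕ → Set Ω, (∀ k, MeasurableSet (N k)) ∧
      (∀ n, ∀ᶠ k in Filter.atTop, N k ⊆ M n k) ∧
      Filter.Tendsto (fun i => (lam (N i)).toReal) (U : Filter ℕ) (nhds r) :=
  stmt7_general lam U hfree hpp M hmeas hdec ν hν r hr
end

section
/- Let U be a nonprincipal ultrafilter on ω such that: for every sequence (a_n) of non-negative reals with lim_{n→U} a_n = 0 there is X ∈ U with Σ_{n∈X} a_n < ∞ (U is semi-selective). Then for every probability measure space (Ω, Σ, λ) and every sequence (P_k) of measurable sets with lim_{k→U} λ(P_k) = 0, there exists X ∈ U such that λ(⋂_{k∈X} ⋃_{i∈X, i>k} P_i) = 0. -/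
/-! By semi-selectivity, some `X ∈ U` has `∑_{i ∈ X} λ(P_i) < ∞`, so by the first Borel–Cantelli
lemma almost every point lies in only finitely many `P_i` with `i ∈ X`. Such a point cannot lie in
`⋂_{k ∈ X} ⋃_{i ∈ X, i > k} P_i`: as `X ≠ ∅`, the indices `i ∈ X` with the point in `P_i` would
form a nonempty finite set without a largest element. -/

open MeasureTheory

theorem MeasureTheory.tsum_measure_ne_top_of_summable_toReal {α ι : Type*} [MeasurableSpace α]
    {μ : Measure α} [IsFiniteMeasure μ] {s : ι → Set α}
    (hs : Summable fun i => (μ (s i)).toReal) : ∑' i, μ (s i) ≠ ⊤ := by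
  rw [← tsum_congr fun i => ENNReal.ofReal_toReal (measure_ne_top μ (s i)),
    ← ENNReal.ofReal_tsum_of_nonneg (fun _ => ENNReal.toReal_nonneg) hs]
  exact ENNReal.ofReal_ne_top

theorem notMem_iInter_iUnion_gt_of_finite {α : Type*} {s : ℕ → Set α} {X : Set ℕ}
    (hX : X.Nonempty) {x : α} (hfin : {i : X | x ∈ s i}.Finite) :
    x ∉ ⋂ k ∈ X, ⋃ i ∈ X, ⋃ (_ : k < i), s i := by
  intro hx
  have above : ∀ k ∈ X, ∃ i, k < i ∧ i ∈ X ∧ x ∈ s i := by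
    intro k hk
    simpa using Set.mem_iInter₂.1 hx k hk
  obtain ⟨k₀, hk₀⟩ := hX
  obtain ⟨i₀, -, hi₀, hxi₀⟩ := above k₀ hk₀
  obtain ⟨m, -, hmax⟩ :=
    Set.exists_max_image _ Subtype.val hfin ⟨⟨i₀, hi₀⟩, hxi₀⟩
  obtain ⟨i, hmi, hi, hxi⟩ := above m m.2
  exact (hmax ⟨i, hi⟩ hxi).not_gt hmi

theorem stmt8_general (U : Ultrafilter ℕ) (hsel : ∀ a : ℕ → ℝ, (∀ n, 0 ≤ a n) →
      Filter.Tendsto a (U : Filter ℕ) (nhds 0) →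
      ∃ X ∈ U, Summable (X.indicator a))
    {Ω : Type*} [MeasurableSpace Ω] (lam : Measure Ω) [IsProbabilityMeasure lam]
    (P : ℕ → Set Ω)
    (h0 : Filter.Tendsto (fun k => (lam (P k)).toReal) (U : Filter ℕ) (nhds 0)) :
    ∃ X ∈ U, lam (⋂ k ∈ X, ⋃ i ∈ X, ⋃ (_ : k < i), P i) = 0 := by
  obtain ⟨X, hXU, hsum⟩ := hsel _ (fun _ => ENNReal.toReal_nonneg) h0
  have hfinite_sum : ∑' i : X, lam (P i) ≠ ⊤ :=
    tsum_measure_ne_top_of_summable_toReal (summable_subtype_iff_indicator.2 hsum)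
  refine ⟨X, hXU, measure_eq_zero_iff_ae_notMem.2 ?_⟩
  filter_upwards [ae_finite_setOfPred_mem hfinite_sum] with x hx
  exact notMem_iInter_iUnion_gt_of_finite (U.nonempty_of_mem hXU) hx

theorem stmt8 (U : Ultrafilter ℕ) (hfree : ∀ A : Set ℕ, A.Finite → A ∉ U)
    (hsel : ∀ a : ℕ → ℝ, (∀ n, 0 ≤ a n) →
      Filter.Tendsto a (U : Filter ℕ) (nhds 0) →
      ∃ X ∈ U, Summable (X.indicator a))
    {Ω : Type*} [MeasurableSpace Ω] (lam : Measure Ω) [IsProbabilityMeasure lam]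
    (P : ℕ → Set Ω) (hP : ∀ k, MeasurableSet (P k))
    (h0 : Filter.Tendsto (fun k => (lam (P k)).toReal) (U : Filter ℕ) (nhds 0)) :
    ∃ X ∈ U, lam (⋂ k ∈ X, ⋃ i ∈ X, ⋃ (_ : k < i), P i) = 0 :=
  stmt8_general U hsel lam P h0
end

section
/- Let λ be the product probability measure on 2^ω and, for s ∈ 2^{<ω}, define M_s(k) = {x ∈ 2^ω : x(k+i) = s(i) for 0 ≤ i < |s|}. Let (s_n) be a sequence in 2^{<ω} such that for each fixed k the sets M_{s_n}(k), n ∈ ω, are pairwise disjoint, and let α = Σ_n 1/2^{|s_n|} ≤ 1. Define M_α(k) = ⋃_n M_{s_n}(k). Then for every Borel set B ⊆ 2^ω, lim_{k→∞} λ(M_α(k) ∩ B) = α · λ(B). -/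
/-! A fair-coin measure makes the cylinder `cyl w k` independent of every event that depends only
on coordinates below `k`, so for such an event `E` one has `λ (cyl w k ∩ E) = 2 ^ (-|w|) λ E` as
soon as `k` is large; the π-λ theorem turns this into `λ (cyl w k ∩ B) → 2 ^ (-|w|) λ B` for every
measurable `B`. Summing over the pairwise disjoint cylinders `cyl (s n) k` is then dominated
convergence for series, with dominating sequence `2 ^ (-|s n|)`. -/

open MeasureTheory Filter Topology Function

/-- The cylinder determined by the finite word `s` placed at position `k`. -/
def cyl (s : List Bool) (k : ℕ) : Set (ℕ → Bool) :=
  {x | ∀ i < s.length, x (k + i) = s.getD i false}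

section ConstraintSets

variable {ι β : Type*}

def constraintSet (F : Finset ι) (σ : ι → β) : Set (ι → β) :=
  {x | ∀ i ∈ F, x i = σ i}

def constraintSets : Set (Set (ι → β)) :=
  {t | ∃ F σ, t = constraintSet F σ}

lemma constraintSet_inter [DecidableEq ι] {F G : Finset ι} {σ τ : ι → β}
    (hστ : ∀ i ∈ F, i ∈ G → σ i = τ i) :
    constraintSet F σ ∩ constraintSet G τ = constraintSet (F ∪ G) (F.piecewise σ τ) := by
  ext x
  simp only [constraintSet, Set.mem_inter_iff, Set.mem_ofPred_eq, Finset.mem_union,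
    Finset.piecewise]
  grind

lemma isPiSystem_constraintSets : IsPiSystem (constraintSets : Set (Set (ι → β))) := by
  classical
  rintro _ ⟨F, σ, rfl⟩ _ ⟨G, τ, rfl⟩ ⟨x, hxF, hxG⟩
  exact ⟨F ∪ G, F.piecewise σ τ,
    constraintSet_inter fun i hiF hiG => (hxF i hiF).symm.trans (hxG i hiG)⟩

variable [MeasurableSpace β]

lemma measurableSet_constraintSet [MeasurableSingletonClass β] (F : Finset ι) (σ : ι → β) :
    MeasurableSet (constraintSet F σ) := by
  have : constraintSet F σ = ⋂ i ∈ F, (fun x => x i) ⁻¹' {σ i} := by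
    ext x; simp [constraintSet]
  rw [this]
  exact Finset.measurableSet_biInter F fun i _ => measurable_pi_apply i (measurableSet_singleton _)

lemma pi_eq_generateFrom_constraintSets [Countable β] [MeasurableSingletonClass β] :
    MeasurableSpace.pi = MeasurableSpace.generateFrom (constraintSets : Set (Set (ι → β))) := by
  refine le_antisymm ?_ (MeasurableSpace.generateFrom_le ?_)
  · refine iSup_le fun i => Measurable.comap_le (@measurable_to_countable' β (ι → β) _ _
      (MeasurableSpace.generateFrom constraintSets) (fun x => x i) fun b => ?_)
    exact MeasurableSpace.measurableSet_generateFrom ⟨{i}, fun _ => b, by ext; simp [constraintSet]⟩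
  · rintro _ ⟨F, σ, rfl⟩
    exact measurableSet_constraintSet F σ

end ConstraintSets

section SeriesOfMeasures

variable {Ω ι α : Type*} [MeasurableSpace Ω] {μ : Measure Ω} [IsFiniteMeasure μ] [Countable ι]

lemma measureReal_iUnion_of_pairwise_disjoint {A : ι → Set Ω} (hd : Pairwise (Disjoint on A))
    (hm : ∀ n, MeasurableSet (A n)) : μ.real (⋃ n, A n) = ∑' n, μ.real (A n) := by
  rw [measureReal_def, measure_iUnion hd hm, ENNReal.tsum_toReal_eq fun n => measure_ne_top μ _]
  rfl

lemma tendsto_measureReal_iUnion_of_dominated {l : Filter α} {A : α → ι → Set Ω}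
    (hd : ∀ k, Pairwise (Disjoint on A k)) (hm : ∀ k n, MeasurableSet (A k n)) {c : ι → ℝ}
    (hlim : ∀ n, Tendsto (fun k => μ.real (A k n)) l (𝓝 (c n))) {bound : ι → ℝ}
    (hbound : Summable bound) (hle : ∀ k n, μ.real (A k n) ≤ bound n) :
    Tendsto (fun k => μ.real (⋃ n, A k n)) l (𝓝 (∑' n, c n)) := by
  simp only [measureReal_iUnion_of_pairwise_disjoint (hd _) (hm _)]
  refine tendsto_tsum_of_dominated_convergence hbound hlim (Eventually.of_forall fun k n => ?_)
  rw [Real.norm_of_nonneg measureReal_nonneg]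
  exact hle k n

end SeriesOfMeasures

section FairCoin

lemma cyl_eq_constraintSet (w : List Bool) (k : ℕ) :
    cyl w k = constraintSet ((Finset.range w.length).map (addLeftEmbedding k))
      (fun i => w.getD (i - k) false) := by
  ext x
  simp [cyl, constraintSet]

lemma measurableSet_cyl (w : List Bool) (k : ℕ) : MeasurableSet (cyl w k) :=
  cyl_eq_constraintSet w k ▸ measurableSet_constraintSet _ _

def IsFairCoin (lam : Measure (ℕ → Bool)) : Prop :=
  ∀ (F : Finset ℕ) (σ : ℕ → Bool), lam (constraintSet F σ) = (1 / 2 : ENNReal) ^ F.card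

variable {lam : Measure (ℕ → Bool)}

lemma IsFairCoin.measureReal_cyl (hlam : IsFairCoin lam) (w : List Bool) (k : ℕ) :
    lam.real (cyl w k) = (1 / 2 : ℝ) ^ w.length := by
  rw [measureReal_def, cyl_eq_constraintSet, hlam, Finset.card_map, Finset.card_range,
    ENNReal.toReal_pow]
  norm_num

lemma IsFairCoin.measure_constraintSet_inter_of_disjoint (hlam : IsFairCoin lam)
    {F G : Finset ℕ} (hFG : Disjoint F G) (σ τ : ℕ → Bool) :
    lam (constraintSet F σ ∩ constraintSet G τ) =
      lam (constraintSet F σ) * lam (constraintSet G τ) := by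
  classical
  rw [constraintSet_inter fun i hiF hiG => absurd hiG (Finset.disjoint_left.mp hFG hiF), hlam,
    hlam, hlam, Finset.card_union_of_disjoint hFG, pow_add]

lemma IsFairCoin.measureReal_cyl_inter_constraintSet (hlam : IsFairCoin lam) (w : List Bool)
    {k : ℕ} {F : Finset ℕ} (hF : ∀ i ∈ F, i < k) (σ : ℕ → Bool) :
    lam.real (cyl w k ∩ constraintSet F σ) =
      (1 / 2 : ℝ) ^ w.length * lam.real (constraintSet F σ) := by
  have hdisj : Disjoint ((Finset.range w.length).map (addLeftEmbedding k)) F := by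
    simp only [Finset.disjoint_left, Finset.mem_map, Finset.mem_range]
    rintro _ ⟨j, -, rfl⟩ hj
    exact absurd (hF _ hj) (by simp)
  rw [← hlam.measureReal_cyl w k, measureReal_def, measureReal_def, measureReal_def,
    ← ENNReal.toReal_mul, cyl_eq_constraintSet, hlam.measure_constraintSet_inter_of_disjoint hdisj]

lemma IsFairCoin.tendsto_measureReal_cyl_inter [IsProbabilityMeasure lam] (hlam : IsFairCoin lam)
    (w : List Bool) {B : Set (ℕ → Bool)} (hB : MeasurableSet B) :
    Tendsto (fun k => lam.real (cyl w k ∩ B)) atTop (𝓝 ((1 / 2 : ℝ) ^ w.length * lam.real B)) := by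
  refine MeasurableSpace.induction_on_inter pi_eq_generateFrom_constraintSets
    isPiSystem_constraintSets ?_ ?_ ?_ ?_ B hB
  · simp
  · rintro _ ⟨F, σ, rfl⟩
    refine tendsto_const_nhds.congr' ?_
    filter_upwards [eventually_gt_atTop (F.sup id)] with k hk
    exact (hlam.measureReal_cyl_inter_constraintSet w
      (fun i hi => (Finset.le_sup (f := id) hi).trans_lt hk) σ).symm
  · intro t ht hlim
    have hsplit : ∀ k, lam.real (cyl w k ∩ tᶜ) = (1 / 2 : ℝ) ^ w.length - lam.real (cyl w k ∩ t) :=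
      fun k => by
        rw [← hlam.measureReal_cyl w k, ← measureReal_inter_add_sdiff (s := cyl w k) ht,
          Set.sdiff_eq]
        ring
    simp only [hsplit, probReal_compl_eq_one_sub ht, mul_one_sub]
    exact tendsto_const_nhds.sub hlim
  · intro f hf hfm hlim
    rw [measureReal_iUnion_of_pairwise_disjoint hf hfm, ← tsum_mul_left]
    simp only [Set.inter_iUnion]
    exact tendsto_measureReal_iUnion_of_dominated
      (fun k m n hmn => (hf hmn).mono Set.inter_subset_right Set.inter_subset_right)
      (fun k n => (measurableSet_cyl w k).inter (hfm n)) hlim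
      (summable_measure_toReal hfm hf) (fun k n => measureReal_mono Set.inter_subset_right)

end FairCoin

theorem stmt11_general (lam : Measure (ℕ → Bool)) [IsProbabilityMeasure lam]
    (hlam : ∀ (F : Finset ℕ) (σ : ℕ → Bool),
      lam {x | ∀ i ∈ F, x i = σ i} = (1 / 2 : ENNReal) ^ F.card)
    (s : ℕ → List Bool)
    (hdisj : ∀ k : ℕ, Pairwise fun m n => Disjoint (cyl (s m) k) (cyl (s n) k))
    (α : ℝ) (hα : HasSum (fun n => ((1 : ℝ) / 2) ^ (s n).length) α)
    (B : Set (ℕ → Bool)) (hB : MeasurableSet B) :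
    Filter.Tendsto (fun k => (lam ((⋃ n, cyl (s n) k) ∩ B)).toReal) Filter.atTop
      (nhds (α * (lam B).toReal)) := by
  have hfair : IsFairCoin lam := hlam
  have hlimit : α * lam.real B = ∑' n, (1 / 2 : ℝ) ^ (s n).length * lam.real B := by
    rw [tsum_mul_right, hα.tsum_eq]
  simp only [← measureReal_def, Set.iUnion_inter, hlimit]
  exact tendsto_measureReal_iUnion_of_dominated
    (fun k m n hmn => (hdisj k hmn).mono Set.inter_subset_left Set.inter_subset_left)
    (fun k n => (measurableSet_cyl _ k).inter hB)
    (fun n => hfair.tendsto_measureReal_cyl_inter (s n) hB) hα.summable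
    (fun k n => (measureReal_mono Set.inter_subset_left).trans_eq (hfair.measureReal_cyl _ k))

theorem stmt11 (lam : Measure (ℕ → Bool)) [IsProbabilityMeasure lam]
    (hlam : ∀ (F : Finset ℕ) (σ : ℕ → Bool),
      lam {x | ∀ i ∈ F, x i = σ i} = (1 / 2 : ENNReal) ^ F.card)
    (s : ℕ → List Bool)
    (hdisj : ∀ k : ℕ, Pairwise fun m n => Disjoint (cyl (s m) k) (cyl (s n) k))
    (α : ℝ) (hα : HasSum (fun n => ((1 : ℝ) / 2) ^ (s n).length) α) (hα1 : α ≤ 1)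
    (B : Set (ℕ → Bool)) (hB : MeasurableSet B) :
    Filter.Tendsto (fun k => (lam ((⋃ n, cyl (s n) k) ∩ B)).toReal) Filter.atTop
      (nhds (α * (lam B).toReal)) :=
  stmt11_general lam hlam s hdisj α hα B hB
end

section
/- Let μ be a non-atomic P-measure on ω: μ is finitely additive, probability, vanishes on points, for every ⊆-decreasing sequence (A_n) there is a pseudointersection A with μ(A) = lim_n μ(A_n), and for every ε > 0 there is a finite partition of ω into sets of measure ≤ ε. Then for every A ⊆ ω and every real α ∈ [0, μ(A)] there exists B ⊆ A with μ(B) = α. -/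
/-!
Exhaust `A` from inside: non-atomicity lets us enlarge any `B ⊆ A` with `μ B ≤ α` to some
`B' ⊆ A` with `α - ε ≤ μ B' ≤ α` (add greedily the traces on `A \ B` of the pieces of a partition
into sets of measure `≤ ε`). This gives an increasing sequence `B n ⊆ A` with `μ (B n) → α`.
The P-property applied to the decreasing sequence `A \ B n` gives a pseudointersection `E` with
`μ E = μ A - α`; since `E ⊆* A` and finite sets are null, `A \ E` has measure `α`.
-/

open Filter Topology

theorem Finset.exists_subset_sum_mem_Icc {ι : Type*} (a : ι → ℝ) {ε t : ℝ} (s : Finset ι)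
    (hε : 0 ≤ ε) (ha : ∀ i ∈ s, a i ≤ ε) (ht₀ : 0 ≤ t) (ht : t ≤ ∑ i ∈ s, a i) :
    ∃ u ⊆ s, t - ε ≤ ∑ i ∈ u, a i ∧ ∑ i ∈ u, a i ≤ t := by
  classical
  induction s using Finset.induction_on with
  | empty =>
    rw [Finset.sum_empty] at ht
    exact ⟨∅, Finset.empty_subset _, by simp only [Finset.sum_empty]; linarith, by simpa⟩
  | insert i s hi ih =>
    rw [Finset.sum_insert hi] at ht
    by_cases hts : t ≤ ∑ j ∈ s, a j
    · obtain ⟨u, hus, hu⟩ := ih (fun j hj => ha j (Finset.mem_insert_of_mem hj)) hts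
      exact ⟨u, hus.trans (Finset.subset_insert i s), hu⟩
    · have hai := ha i (Finset.mem_insert_self i s)
      exact ⟨s, Finset.subset_insert i s, by linarith, by linarith⟩

namespace FinitelyAdditive

variable {X : Type*} {μ : Set X → ℝ}
  (hadd : ∀ A B : Set X, Disjoint A B → μ (A ∪ B) = μ A + μ B)
include hadd

theorem apply_empty : μ ∅ = 0 := by
  have h := hadd ∅ ∅ (Set.disjoint_empty ∅)
  rw [Set.union_empty] at h
  linarith

theorem inter_add_diff (A B : Set X) : μ (A ∩ B) + μ (A \ B) = μ A := by
  rw [← hadd _ _ Set.disjoint_sdiff_inter.symm, Set.inter_union_sdiff]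

theorem diff_of_subset {A B : Set X} (h : B ⊆ A) : μ (A \ B) = μ A - μ B := by
  have h' := inter_add_diff hadd A B
  rw [Set.inter_eq_right.2 h] at h'
  linarith

theorem mono (hnonneg : ∀ A, 0 ≤ μ A) {A B : Set X} (h : A ⊆ B) : μ A ≤ μ B := by
  linarith [diff_of_subset hadd h, hnonneg (B \ A)]

theorem apply_of_finite (hpoints : ∀ x, μ {x} = 0) {S : Set X} (hS : S.Finite) : μ S = 0 := by
  induction S, hS using Set.Finite.induction_on with
  | empty => exact apply_empty hadd
  | insert ha _ ih =>
    rw [Set.insert_eq, hadd _ _ (Set.disjoint_singleton_left.2 ha), hpoints, ih, add_zero]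

theorem inter_of_diff_finite (hpoints : ∀ x, μ {x} = 0) {A E : Set X} (h : (E \ A).Finite) :
    μ (E ∩ A) = μ E := by
  rw [← inter_add_diff hadd E A, apply_of_finite hadd hpoints h, add_zero]

theorem biUnion_finset {ι : Type*} {Q : ι → Set X} (hQ : Pairwise (Function.onFun Disjoint Q))
    (s : Finset ι) : μ (⋃ i ∈ s, Q i) = ∑ i ∈ s, μ (Q i) := by
  classical
  induction s using Finset.induction_on with
  | empty => simpa using apply_empty hadd
  | insert i s hi ih =>
    rw [Finset.set_biUnion_insert, hadd _ _ ?_, ih, Finset.sum_insert hi]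
    exact Set.disjoint_iUnion₂_right.2 fun j hj => hQ fun hij => hi (hij ▸ hj)

theorem exists_subset_mem_Icc_of_partition (hnonneg : ∀ A, 0 ≤ μ A) {ι : Type*} [Fintype ι]
    {P : ι → Set X} (hcov : ⋃ i, P i = Set.univ) (hdisj : Pairwise (Function.onFun Disjoint P))
    {ε : ℝ} (hε : 0 ≤ ε) (hP : ∀ i, μ (P i) ≤ ε) (C : Set X) {t : ℝ} (ht₀ : 0 ≤ t)
    (htC : t ≤ μ C) : ∃ D ⊆ C, t - ε ≤ μ D ∧ μ D ≤ t := by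
  have hdisjC : Pairwise (Function.onFun Disjoint fun i => C ∩ P i) := fun i j hij =>
    (hdisj hij).mono Set.inter_subset_right Set.inter_subset_right
  have hsum : ∑ i, μ (C ∩ P i) = μ C := by
    rw [← biUnion_finset hadd hdisjC, ← Set.inter_iUnion₂]
    simp [hcov]
  obtain ⟨u, -, hu⟩ := Finset.exists_subset_sum_mem_Icc (fun i => μ (C ∩ P i)) Finset.univ hε
    (fun i _ => (mono hadd hnonneg Set.inter_subset_right).trans (hP i)) ht₀ (hsum ▸ htC)
  refine ⟨⋃ i ∈ u, C ∩ P i, Set.iUnion₂_subset fun i _ => Set.inter_subset_left, ?_⟩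
  rwa [biUnion_finset hadd hdisjC]

variable (hnonneg : ∀ A, 0 ≤ μ A)
  (hna : ∀ ε : ℝ, 0 < ε → ∃ (N : ℕ) (P : Fin N → Set X),
    (⋃ i, P i) = Set.univ ∧ Pairwise (Function.onFun Disjoint P) ∧ ∀ i, μ (P i) ≤ ε)
include hnonneg hna

theorem exists_superset_mem_Icc {A B : Set X} {α ε : ℝ} (hBA : B ⊆ A) (hBα : μ B ≤ α)
    (hαA : α ≤ μ A) (hε : 0 < ε) :
    ∃ B', B ⊆ B' ∧ B' ⊆ A ∧ α - ε ≤ μ B' ∧ μ B' ≤ α := by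
  obtain ⟨N, P, hcov, hdisj, hP⟩ := hna ε hε
  obtain ⟨D, hD, hDα⟩ := exists_subset_mem_Icc_of_partition hadd hnonneg hcov hdisj hε.le hP
    (A \ B) (sub_nonneg.2 hBα) (by rw [diff_of_subset hadd hBA]; linarith)
  have hμ : μ (B ∪ D) = μ B + μ D := hadd B D (Set.disjoint_sdiff_right.mono_right hD)
  exact ⟨B ∪ D, Set.subset_union_left, Set.union_subset hBA (hD.trans Set.sdiff_subset),
    by linarith [hDα.1], by linarith [hDα.2]⟩

theorem exists_seq_subset_tendsto {A : Set X} {α : ℝ} (hα₀ : 0 ≤ α) (hαA : α ≤ μ A) :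
    ∃ B : ℕ → Set X, (∀ n, B n ⊆ A) ∧ (∀ n, B n ⊆ B (n + 1)) ∧
      Tendsto (fun n => μ (B n)) atTop (𝓝 α) := by
  let S := {B : Set X // B ⊆ A ∧ μ B ≤ α}
  have step (n : ℕ) (B : S) : ∃ B' : S, B.1 ⊆ B'.1 ∧ α - 1 / (n + 1) ≤ μ B'.1 := by
    obtain ⟨B', hBB', hB'A, hlow, hup⟩ :=
      exists_superset_mem_Icc hadd hnonneg hna B.2.1 B.2.2 hαA Nat.one_div_pos_of_nat
    exact ⟨⟨B', hB'A, hup⟩, hBB', hlow⟩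
  choose next hsub hlow using step
  let seq : ℕ → S := fun n =>
    Nat.rec ⟨∅, Set.empty_subset A, (apply_empty hadd).symm ▸ hα₀⟩ next n
  refine ⟨fun n => (seq n).1, fun n => (seq n).2.1, fun n => hsub n (seq n), ?_⟩
  rw [← tendsto_add_atTop_iff_nat 1]
  have hlim : Tendsto (fun n : ℕ => α - 1 / ((n : ℝ) + 1)) atTop (𝓝 α) := by
    simpa using tendsto_const_nhds.sub (tendsto_one_div_add_atTop_nhds_zero_nat (𝕜 := ℝ))
  exact tendsto_of_tendsto_of_tendsto_of_le_of_le hlim tendsto_const_nhds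
    (fun n => hlow n (seq n)) fun n => (seq (n + 1)).2.2

end FinitelyAdditive

theorem stmt12_general (μ : Set ℕ → ℝ)
    (hadd : ∀ A B : Set ℕ, Disjoint A B → μ (A ∪ B) = μ A + μ B)
    (hnonneg : ∀ A : Set ℕ, 0 ≤ μ A)
    (hpoints : ∀ n : ℕ, μ {n} = 0)
    (hP : ∀ A : ℕ → Set ℕ, (∀ n, A (n + 1) ⊆ A n) →
      ∃ B : Set ℕ, (∀ n, (B \ A n).Finite) ∧
        Filter.Tendsto (fun n => μ (A n)) Filter.atTop (nhds (μ B)))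
    (hna : ∀ ε : ℝ, 0 < ε → ∃ (N : ℕ) (P : Fin N → Set ℕ),
      (⋃ i, P i) = Set.univ ∧ Pairwise (Function.onFun Disjoint P) ∧ ∀ i, μ (P i) ≤ ε) :
    ∀ (A : Set ℕ) (α : ℝ), α ∈ Set.Icc 0 (μ A) → ∃ B ⊆ A, μ B = α := by
  rintro A α ⟨hα₀, hαA⟩
  obtain ⟨B, hBA, hBmono, hBlim⟩ :=
    FinitelyAdditive.exists_seq_subset_tendsto hadd hnonneg hna hα₀ hαA
  obtain ⟨E, hEB, hElim⟩ := hP (fun n => A \ B n) fun n => Set.sdiff_subset_sdiff_right (hBmono n)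
  have hμE : μ E = μ A - α := tendsto_nhds_unique hElim <| by
    simpa only [FinitelyAdditive.diff_of_subset hadd (hBA _)] using tendsto_const_nhds.sub hBlim
  have hEA : (E \ A).Finite := (hEB 0).subset (Set.sdiff_subset_sdiff_right Set.sdiff_subset)
  refine ⟨A \ E, Set.sdiff_subset, ?_⟩
  have hsplit := FinitelyAdditive.inter_add_diff hadd A E
  rw [Set.inter_comm, FinitelyAdditive.inter_of_diff_finite hadd hpoints hEA, hμE] at hsplit
  linarith

theorem stmt12 (μ : Set ℕ → ℝ)
    (hadd : ∀ A B : Set ℕ, Disjoint A B → μ (A ∪ B) = μ A + μ B)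
    (hnonneg : ∀ A : Set ℕ, 0 ≤ μ A)
    (hprob : μ Set.univ = 1)
    (hpoints : ∀ n : ℕ, μ {n} = 0)
    (hP : ∀ A : ℕ → Set ℕ, (∀ n, A (n + 1) ⊆ A n) →
      ∃ B : Set ℕ, (∀ n, (B \ A n).Finite) ∧
        Filter.Tendsto (fun n => μ (A n)) Filter.atTop (nhds (μ B)))
    (hna : ∀ ε : ℝ, 0 < ε → ∃ (N : ℕ) (P : Fin N → Set ℕ),
      (⋃ i, P i) = Set.univ ∧ Pairwise (Function.onFun Disjoint P) ∧ ∀ i, μ (P i) ≤ ε) :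
    ∀ (A : Set ℕ) (α : ℝ), α ∈ Set.Icc 0 (μ A) → ∃ B ⊆ A, μ B = α :=
  stmt12_general μ hadd hnonneg hpoints hP hna
end

section
/- Let U be a P-point ultrafilter on ω and define ν : ℘(ω) → [0,1] by ν(A) = lim_{n→U} |A ∩ {0,…,n−1}| / n. Then ν is a finitely additive probability measure on ω that vanishes on points, extends the asymptotic density on all sets for which the density exists, and is a non-atomic P-measure. -/
/-!
Everything except the P-measure property passes from the partial densities to their limit along
`U`, using that a free ultrafilter refines the Fréchet filter; non-atomicity comes from the residue
classes modulo `N`, whose partial densities are at most `1/N + 1/n`.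

For a decreasing sequence `A k` with `L = inf ν (A k)`, the sets of `n` at which the partial
density of `A k` exceeds `L - 1/(k+1)` lie in `U`. A P-point gives `E ∈ U` almost contained in all
of them, so there are thresholds `m 0 < m 1 < ⋯` such that every `n ∈ E` beyond `m k` lies in the
`k`-th one. The set `B = ⋂ k, (A k ∪ [0, m k))` is a pseudointersection, and if `n ∈ E` and
`m j ≤ n < m (j+1)` then `B ∩ [0, n)` contains `A j ∩ [0, n)`; hence `ν B ≥ L`. Conversely
`ν B ≤ ν (A k)` for every `k`, because `B \ A k` is finite.
-/

open Filter Set Topology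

noncomputable def partialDensity (A : Set ℕ) (n : ℕ) : ℝ := ((A ∩ Iio n).ncard : ℝ) / n

lemma partialDensity_nonneg (A : Set ℕ) (n : ℕ) : 0 ≤ partialDensity A n := by
  unfold partialDensity; positivity

lemma partialDensity_le_of_inter_Iio_subset {A B : Set ℕ} {n : ℕ} (h : A ∩ Iio n ⊆ B) :
    partialDensity A n ≤ partialDensity B n := by
  unfold partialDensity
  gcongr ?_ / _
  exact_mod_cast
    ncard_le_ncard (subset_inter h inter_subset_right) ((finite_Iio n).inter_of_right B)

lemma partialDensity_mono {A B : Set ℕ} (h : A ⊆ B) (n : ℕ) :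
    partialDensity A n ≤ partialDensity B n :=
  partialDensity_le_of_inter_Iio_subset (inter_subset_left.trans h)

lemma partialDensity_union_of_disjoint {A B : Set ℕ} (h : Disjoint A B) (n : ℕ) :
    partialDensity (A ∪ B) n = partialDensity A n + partialDensity B n := by
  unfold partialDensity
  rw [← add_div, union_inter_distrib_right,
    ncard_union_eq (h.mono inter_subset_left inter_subset_left)
      ((finite_Iio n).inter_of_right A) ((finite_Iio n).inter_of_right B), Nat.cast_add]

lemma partialDensity_univ {n : ℕ} (hn : n ≠ 0) : partialDensity univ n = 1 := by
  simp [partialDensity, hn]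

lemma partialDensity_le_ncard_div {F : Set ℕ} (hF : F.Finite) (n : ℕ) :
    partialDensity F n ≤ F.ncard / n := by
  unfold partialDensity
  gcongr
  exact inter_subset_left

lemma tendsto_partialDensity_of_finite {F : Set ℕ} (hF : F.Finite) :
    Tendsto (partialDensity F) atTop (𝓝 0) :=
  squeeze_zero (partialDensity_nonneg F) (partialDensity_le_ncard_div hF)
    (tendsto_const_div_atTop_nhds_zero_nat _)

lemma Nat.ncard_modEq_inter_Iio_le (N i n : ℕ) (hN : 0 < N) :
    ({x | x ≡ i [MOD N]} ∩ Iio n).ncard ≤ n / N + 1 := by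
  have : {x | x ≡ i [MOD N]} ∩ Iio n = ↑({x ∈ Finset.range n | x ≡ i [MOD N]}) := by
    ext x; simp [and_comm]
  rw [this, ncard_coe_finset, ← Nat.count_eq_card_filter_range, Nat.count_modEq_card _ hN]
  split_ifs <;> omega

lemma partialDensity_modEq_le (N i n : ℕ) (hN : 0 < N) :
    partialDensity {x | x ≡ i [MOD N]} n ≤ 1 / N + 1 / n := by
  rcases eq_or_ne n 0 with rfl | hn
  · simp [partialDensity]
  unfold partialDensity
  calc (({x | x ≡ i [MOD N]} ∩ Iio n).ncard : ℝ) / n ≤ ((n / N : ℕ) + 1 : ℝ) / n := by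
        gcongr; exact_mod_cast Nat.ncard_modEq_inter_Iio_le N i n hN
    _ ≤ ((n : ℝ) / N + 1) / n := by gcongr; exact Nat.cast_div_le
    _ = 1 / N + 1 / n := by field_simp

def IsDensityLimit (l : Filter ℕ) (ν : Set ℕ → ℝ) : Prop :=
  ∀ A, Tendsto (partialDensity A) l (𝓝 (ν A))

def IsPFilter (l : Filter ℕ) : Prop :=
  ∀ A : ℕ → Set ℕ, (∀ n, A n ∈ l) → ∃ B ∈ l, ∀ n, (B \ A n).Finite

lemma StrictMono.exists_le_lt_succ {m : ℕ → ℕ} (hm : StrictMono m) {J n : ℕ} (hJ : m J ≤ n) :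
    ∃ j, J ≤ j ∧ m j ≤ n ∧ n < m (j + 1) := by
  by_contra! h
  have hle : ∀ j, J ≤ j → m j ≤ n := fun j hj => Nat.le_induction hJ h j hj
  have h₁ : n + J + 1 ≤ m (n + J + 1) := hm.id_le _
  have h₂ := hle (n + J + 1) (by omega)
  omega

lemma iInter_union_Iio_diff_subset (A : ℕ → Set ℕ) (m : ℕ → ℕ) (k : ℕ) :
    (⋂ i, (A i ∪ Iio (m i))) \ A k ⊆ Iio (m k) := fun _ ⟨hx, hxA⟩ =>
  ((mem_iInter.1 hx k).resolve_left hxA)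

lemma inter_Iio_subset_iInter_union_Iio {A : ℕ → Set ℕ} {m : ℕ → ℕ} (hA : Antitone A)
    (hm : Monotone m) {j n : ℕ} (hn : n ≤ m (j + 1)) : A j ∩ Iio n ⊆ ⋂ i, (A i ∪ Iio (m i)) := by
  intro x ⟨hxA, hxn⟩
  refine mem_iInter.2 fun i => ?_
  rcases le_or_gt i j with hij | hji
  · exact Or.inl (hA hij hxA)
  · exact Or.inr (lt_of_lt_of_le hxn (hn.trans (hm hji)))

namespace IsDensityLimit

variable {l : Filter ℕ} {ν : Set ℕ → ℝ}

lemma nonneg [l.NeBot] (hν : IsDensityLimit l ν) (A : Set ℕ) : 0 ≤ ν A :=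
  ge_of_tendsto' (hν A) (partialDensity_nonneg A)

lemma mono [l.NeBot] (hν : IsDensityLimit l ν) {A B : Set ℕ} (h : A ⊆ B) : ν A ≤ ν B :=
  le_of_tendsto_of_tendsto' (hν A) (hν B) (partialDensity_mono h)

lemma union [l.NeBot] (hν : IsDensityLimit l ν) {A B : Set ℕ} (h : Disjoint A B) :
    ν (A ∪ B) = ν A + ν B :=
  tendsto_nhds_unique (hν (A ∪ B)) <|
    ((hν A).add (hν B)).congr fun n => (partialDensity_union_of_disjoint h n).symm

lemma eq_of_tendsto_atTop [l.NeBot] (hν : IsDensityLimit l ν) (hl : l ≤ atTop) {A : Set ℕ}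
    {d : ℝ} (hd : Tendsto (partialDensity A) atTop (𝓝 d)) : ν A = d :=
  tendsto_nhds_unique (hν A) (hd.mono_left hl)

lemma univ [l.NeBot] (hν : IsDensityLimit l ν) (hl : l ≤ atTop) : ν univ = 1 :=
  hν.eq_of_tendsto_atTop hl <| tendsto_const_nhds.congr' <|
    (eventually_ne_atTop 0).mono fun _ hn => (partialDensity_univ hn).symm

lemma eq_zero_of_finite [l.NeBot] (hν : IsDensityLimit l ν) (hl : l ≤ atTop) {F : Set ℕ}
    (hF : F.Finite) : ν F = 0 :=
  hν.eq_of_tendsto_atTop hl (tendsto_partialDensity_of_finite hF)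

lemma le_of_diff_finite [l.NeBot] (hν : IsDensityLimit l ν) (hl : l ≤ atTop) {A B : Set ℕ}
    (h : (A \ B).Finite) : ν A ≤ ν B :=
  calc ν A ≤ ν (B ∪ A \ B) := hν.mono (by simp)
    _ = ν B := by rw [hν.union disjoint_sdiff_right, hν.eq_zero_of_finite hl h, add_zero]

lemma modEq_le [l.NeBot] (hν : IsDensityLimit l ν) (hl : l ≤ atTop) {N : ℕ} (hN : 0 < N)
    (i : ℕ) : ν {x | x ≡ i [MOD N]} ≤ 1 / N := by
  refine le_of_tendsto_of_tendsto (hν _) ?_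
    (Eventually.of_forall (partialDensity_modEq_le N i · hN))
  simpa using ((tendsto_const_nhds (x := (1 / N : ℝ))).add
    tendsto_one_div_atTop_nhds_zero_nat).mono_left hl

lemma exists_partition_le [l.NeBot] (hν : IsDensityLimit l ν) (hl : l ≤ atTop) {ε : ℝ}
    (hε : 0 < ε) : ∃ (N : ℕ) (P : Fin N → Set ℕ),
      (⋃ i, P i) = Set.univ ∧ Pairwise (Function.onFun Disjoint P) ∧ ∀ i, ν (P i) ≤ ε := by
  obtain ⟨N, hN⟩ := exists_nat_one_div_lt hε
  refine ⟨N + 1, fun i => {x | x ≡ i [MOD N + 1]}, ?_, ?_, fun i => ?_⟩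
  · exact eq_univ_of_forall fun x => mem_iUnion.2 ⟨⟨x % (N + 1), Nat.mod_lt _ N.succ_pos⟩,
      (Nat.mod_modEq x _).symm⟩
  · intro i j hij
    refine disjoint_left.2 fun x (hi : x ≡ i [MOD N + 1]) (hj : x ≡ j [MOD N + 1]) => hij ?_
    exact Fin.ext (Nat.ModEq.eq_of_lt_of_lt (hi.symm.trans hj) i.isLt j.isLt)
  · exact (hν.modEq_le hl N.succ_pos i).trans (by exact_mod_cast hN.le)

lemma exists_pseudointersection_ge [l.NeBot] (hν : IsDensityLimit l ν) (hl : l ≤ atTop)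
    (hP : IsPFilter l) {A : ℕ → Set ℕ} (hA : Antitone A) {L : ℝ} (hL : ∀ k, L ≤ ν (A k)) :
    ∃ B, (∀ k, (B \ A k).Finite) ∧ L ≤ ν B := by
  set good : ℕ → Set ℕ := fun k => {n | L - 1 / (k + 1) < partialDensity (A k) n}
  have hgood : ∀ k, good k ∈ l := fun k =>
    (hν (A k)).eventually (lt_mem_nhds ((sub_lt_self L (by positivity)).trans_le (hL k)))
  obtain ⟨E, hE, hEgood⟩ := hP good hgood
  obtain ⟨m, hm, hmE⟩ : ∃ m : ℕ → ℕ, StrictMono m ∧ ∀ k, ∀ n ∈ E, m k ≤ n → n ∈ good k := by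
    refine extraction_forall_of_eventually'
      (P := fun k t => ∀ n ∈ E, t ≤ n → n ∈ good k) fun k => ?_
    obtain ⟨b, hb⟩ := (hEgood k).bddAbove
    exact ⟨b + 1, fun t ht n hn htn => by_contra fun h => absurd (hb ⟨hn, h⟩) (by omega)⟩
  set B := ⋂ i, (A i ∪ Iio (m i))
  refine ⟨B, fun k => (finite_Iio (m k)).subset (iInter_union_Iio_diff_subset A m k), ?_⟩
  have hJ : ∀ J : ℕ, L - 1 / (J + 1) ≤ ν B := fun J => by
    refine ge_of_tendsto (hν B) ?_
    filter_upwards [hE, hl (Ici_mem_atTop (m J))] with n hnE hnJ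
    obtain ⟨j, hJj, hjn, hnj⟩ := hm.exists_le_lt_succ hnJ
    calc L - 1 / (J + 1) ≤ L - 1 / (j + 1) := by gcongr
      _ ≤ partialDensity (A j) n := (hmE j n hnE hjn).le
      _ ≤ partialDensity B n := partialDensity_le_of_inter_Iio_subset
          (inter_Iio_subset_iInter_union_Iio hA hm.monotone hnj.le)
  refine le_of_tendsto' (x := atTop) ?_ hJ
  simpa using (tendsto_const_nhds (x := L)).sub tendsto_one_div_add_atTop_nhds_zero_nat

lemma exists_pseudointersection_tendsto [l.NeBot] (hν : IsDensityLimit l ν) (hl : l ≤ atTop)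
    (hP : IsPFilter l) {A : ℕ → Set ℕ} (hA : Antitone A) :
    ∃ B, (∀ n, (B \ A n).Finite) ∧ Tendsto (fun n => ν (A n)) atTop (𝓝 (ν B)) := by
  have hbdd : BddBelow (range fun n => ν (A n)) := ⟨0, forall_mem_range.2 fun n => hν.nonneg _⟩
  obtain ⟨B, hBA, hLB⟩ := hν.exists_pseudointersection_ge hl hP hA (ciInf_le hbdd)
  have hBL : ν B ≤ ⨅ n, ν (A n) := le_ciInf fun n => hν.le_of_diff_finite hl (hBA n)
  exact ⟨B, hBA, le_antisymm hBL hLB ▸ tendsto_atTop_ciInf (fun _ _ h => hν.mono (hA h)) hbdd⟩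

end IsDensityLimit

theorem stmt14 (U : Ultrafilter ℕ) (hfree : ∀ A : Set ℕ, A.Finite → A ∉ U)
    (hpp : ∀ A : ℕ → Set ℕ, (∀ n, A n ∈ U) → ∃ B ∈ U, ∀ n, (B \ A n).Finite)
    (ν : Set ℕ → ℝ)
    (hν : ∀ A : Set ℕ, Filter.Tendsto
      (fun n => ((A ∩ Set.Iio n).ncard : ℝ) / n) (U : Filter ℕ) (nhds (ν A))) :
    (∀ A B : Set ℕ, Disjoint A B → ν (A ∪ B) = ν A + ν B) ∧
    (∀ A : Set ℕ, 0 ≤ ν A) ∧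
    ν Set.univ = 1 ∧
    (∀ n : ℕ, ν {n} = 0) ∧
    (∀ (A : Set ℕ) (d : ℝ),
      Filter.Tendsto (fun n => ((A ∩ Set.Iio n).ncard : ℝ) / n) Filter.atTop (nhds d) →
      ν A = d) ∧
    (∀ ε : ℝ, 0 < ε → ∃ (N : ℕ) (P : Fin N → Set ℕ),
      (⋃ i, P i) = Set.univ ∧ Pairwise (Function.onFun Disjoint P) ∧ ∀ i, ν (P i) ≤ ε) ∧
    (∀ A : ℕ → Set ℕ, (∀ n, A (n + 1) ⊆ A n) →
      ∃ B : Set ℕ, (∀ n, (B \ A n).Finite) ∧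
        Filter.Tendsto (fun n => ν (A n)) Filter.atTop (nhds (ν B))) := by
  have hν : IsDensityLimit U ν := hν
  have hU : (U : Filter ℕ) ≤ atTop := by
    rw [← Nat.cofinite_eq_atTop]
    exact fun s hs => Ultrafilter.compl_notMem_iff.1 (hfree _ hs)
  exact ⟨fun _ _ => hν.union, hν.nonneg, hν.univ hU,
    fun n => hν.eq_zero_of_finite hU (finite_singleton n), fun _ _ => hν.eq_of_tendsto_atTop hU,
    fun _ => hν.exists_partition_le hU,
    fun _ hA => hν.exists_pseudointersection_tendsto hU hpp (antitone_nat_of_succ_le hA)⟩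
end

section
/- Let U be a nonprincipal ultrafilter on ω with the property that for every probability space (Ω, Σ, λ) and every sequence (P_k) of measurable sets with lim_{k→U} λ(P_k) = 0 there exists X ∈ U with λ(⋂_{k∈X} ⋃_{i∈X,i>k} P_i) = 0. Then U is semi-selective: for every sequence (a_n) ∈ [0,1]^ω with lim_{n→U} a_n = 0 there exists X ∈ U with Σ_{n∈X} a_n < ∞. -/
/-!
Suppose no `X ∈ U` makes `∑_{n ∈ X} a n` finite. Take independent events `P n` with
`λ (P n) = a n`; then `λ (P n) → 0` along `U`, so the hypothesis gives `X ∈ U` on which the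
events occur infinitely often with probability `0`. But the series diverges along `X`, so by the
second Borel–Cantelli lemma (applied to the events indexed by `X`, enumerated increasingly) this
probability is `1`.
-/

open MeasureTheory ProbabilityTheory Filter
open scoped ENNReal unitInterval

lemma Summable.of_tsum_ofReal_ne_top {α : Type*} {f : α → ℝ} (hf : ∀ i, 0 ≤ f i)
    (h : ∑' i, ENNReal.ofReal (f i) ≠ ∞) : Summable f :=
  (ENNReal.summable_toReal h).congr fun i => ENNReal.toReal_ofReal (hf i)

/-- Take `s i = {X i ≤ p i}` for i.i.d. uniform random variables `X i` on `[0, 1]`. -/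
theorem exists_iIndepSet_measure_eq {ι : Type} (p : ι → I) :
    ∃ (Ω : Type) (_ : MeasurableSpace Ω) (μ : Measure Ω), IsProbabilityMeasure μ ∧
      ∃ s : ι → Set Ω, (∀ i, MeasurableSet (s i)) ∧ iIndepSet s μ ∧
        ∀ i, μ (s i) = ENNReal.ofReal (p i) := by
  obtain ⟨Ω, _, μ, X, hXm, hlaw, hindep, hμ⟩ := exists_iid ι (volume : Measure I)
  have hsm : ∀ i, MeasurableSet (X i ⁻¹' Set.Iic (p i)) := fun i => hXm i measurableSet_Iic
  refine ⟨Ω, _, μ, hμ, fun i => X i ⁻¹' Set.Iic (p i), hsm, ?_, fun i => ?_⟩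
  · rw [iIndepSet_iff_meas_biInter hsm]
    exact fun t => hindep.meas_biInter fun i _ => ⟨_, measurableSet_Iic, rfl⟩
  · rw [← Measure.map_apply (hXm i) measurableSet_Iic, (hlaw i).map_eq, unitInterval.volume_Iic]

/-- The second Borel–Cantelli lemma along a set `X` of indices. -/
theorem measure_biInter_biUnion_gt_eq_one {Ω : Type*} {_ : MeasurableSpace Ω} {μ : Measure Ω}
    {s : ℕ → Set Ω} (hsm : ∀ n, MeasurableSet (s n))
    (hs : iIndepSet s μ) {X : Set ℕ} (hX : ∑' i : X, μ (s i) = ∞) :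
    μ (⋂ k ∈ X, ⋃ i ∈ X, ⋃ (_ : k < i), s i) = 1 := by
  classical
  have := hs.isProbabilityMeasure
  have : Infinite X := by
    by_contra hfin
    have := Finite.of_not_infinite hfin
    have := Fintype.ofFinite X
    refine hX.not_lt ?_
    simpa only [tsum_fintype] using ENNReal.sum_lt_top.2 fun i _ => measure_lt_top μ _
  set e := Nat.Subtype.orderIsoOfNat X
  have he : StrictMono fun n => (e n : ℕ) := Subtype.strictMono_coe _ |>.comp e.strictMono
  have hlimsup : μ (limsup (fun n => s (e n)) atTop) = 1 :=
    measure_limsup_eq_one (fun n => hsm _) (hs.precomp he.injective)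
      ((e.toEquiv.tsum_eq fun i : X => μ (s i)).trans hX)
  refine le_antisymm prob_le_one (hlimsup ▸ measure_mono ?_)
  intro ω hω
  rw [mem_limsup_iff_frequently_mem] at hω
  simp only [Set.mem_iInter, Set.mem_iUnion]
  intro k _
  obtain ⟨n, hωn, hn⟩ := (hω.and_eventually (eventually_gt_atTop k)).exists
  exact ⟨e n, (e n).2, hn.trans_le (he.id_le n), hωn⟩

theorem stmt15_general (U : Ultrafilter ℕ)
    (hBC : ∀ (Ω : Type) (_ : MeasurableSpace Ω) (lam : Measure Ω),
      IsProbabilityMeasure lam →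
      ∀ P : ℕ → Set Ω, (∀ k, MeasurableSet (P k)) →
        Filter.Tendsto (fun k => (lam (P k)).toReal) (U : Filter ℕ) (nhds 0) →
        ∃ X ∈ U, lam (⋂ k ∈ X, ⋃ i ∈ X, ⋃ (_ : k < i), P i) = 0) :
    ∀ a : ℕ → ℝ, (∀ n, a n ∈ Set.Icc (0 : ℝ) 1) →
      Filter.Tendsto a (U : Filter ℕ) (nhds 0) →
      ∃ X ∈ U, Summable (Set.indicator X a) := by
  intro a ha haU
  obtain ⟨Ω, _, μ, hμ, P, hPm, hPindep, hPμ⟩ := exists_iIndepSet_measure_eq fun n => ⟨a n, ha n⟩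
  replace hPμ : ∀ k, μ (P k) = ENNReal.ofReal (a k) := hPμ
  have hPreal : (fun k => (μ (P k)).toReal) = a := funext fun k => by
    rw [hPμ, ENNReal.toReal_ofReal (ha k).1]
  obtain ⟨X, hXU, hX⟩ := hBC Ω _ μ hμ P hPm (hPreal ▸ haU)
  refine ⟨X, hXU, ?_⟩
  rw [← summable_subtype_iff_indicator]
  refine Summable.of_tsum_ofReal_ne_top (fun i => (ha i).1) fun hsum => ?_
  have hdiv : ∑' i : X, μ (P i) = ∞ := by simpa only [hPμ, Function.comp_apply] using hsum
  exact one_ne_zero ((measure_biInter_biUnion_gt_eq_one hPm hPindep hdiv).symm.trans hX)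

theorem stmt15 (U : Ultrafilter ℕ) (hfree : ∀ A : Set ℕ, A.Finite → A ∉ U)
    (hBC : ∀ (Ω : Type) (_ : MeasurableSpace Ω) (lam : Measure Ω),
      IsProbabilityMeasure lam →
      ∀ P : ℕ → Set Ω, (∀ k, MeasurableSet (P k)) →
        Filter.Tendsto (fun k => (lam (P k)).toReal) (U : Filter ℕ) (nhds 0) →
        ∃ X ∈ U, lam (⋂ k ∈ X, ⋃ i ∈ X, ⋃ (_ : k < i), P i) = 0) :
    ∀ a : ℕ → ℝ, (∀ n, a n ∈ Set.Icc (0 : ℝ) 1) →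
      Filter.Tendsto a (U : Filter ℕ) (nhds 0) →
      ∃ X ∈ U, Summable (Set.indicator X a) :=
  stmt15_general U hBC
end

section
/- Let U be a P-point ultrafilter on ω. For every sequence (r_n) of reals decreasing to a limit r and every array (a_{n,k})_{n,k∈ω} of reals in [0,1] that is pointwise decreasing in n (a_{n+1,k} ≤ a_{n,k}) and satisfies lim_{k→U} a_{n,k} = r_n for each n, there exists a function k ↦ n_k with n_k → ∞ such that the diagonal sequence b_k = a_{n_k, k} satisfies lim_{k→U} b_k = r and for each fixed n, b_k ≤ a_{n,k} for all but finitely many k. -/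
/-!
Pick `A n ∈ U` on which `a n ·` is `1/(n+1)`-close to `r n`, and a pseudointersection `B ∈ U`
of the `A n`. Since each `B \ A n` is finite, for large `k` the point `k` lies in `A m` for all
`m` up to some `n_k → ∞` whenever `k ∈ B`; taking the largest such `n_k ≤ k` gives
`|a_{n_k,k} - r_{n_k}| < 1/(n_k+1)` on `B`, hence `b_k → r` along `U`. Eventual domination
`b_k ≤ a_{n,k}` is monotonicity in `n` together with `n_k → ∞`.
-/

open Filter Topology

theorem Ultrafilter.le_cofinite_of_forall_finite_notMem {α : Type*} (U : Ultrafilter α)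
    (h : ∀ A : Set α, A.Finite → A ∉ U) : (U : Filter α) ≤ cofinite :=
  fun _ hs => Ultrafilter.compl_notMem_iff.1 (h _ hs)

section DiagIndex

open Classical

noncomputable def diagIndex (A : ℕ → Set ℕ) (B : Set ℕ) (k : ℕ) : ℕ :=
  Nat.findGreatest (fun n => ∀ m ≤ n, k ∈ B → k ∈ A m) k

variable {A : ℕ → Set ℕ} {B : Set ℕ}

theorem tendsto_diagIndex (hBA : ∀ n, (B \ A n).Finite) :
    Tendsto (diagIndex A B) atTop atTop := by
  refine tendsto_atTop.2 fun N => ?_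
  have hfin : (⋃ m ∈ Set.Iic N, B \ A m).Finite := (Set.finite_Iic N).biUnion fun m _ => hBA m
  have hout := hfin.eventually_cofinite_notMem
  rw [Nat.cofinite_eq_atTop] at hout
  filter_upwards [hout, eventually_ge_atTop N] with k hk hNk
  unfold diagIndex
  refine Nat.le_findGreatest hNk fun m hm hkB => ?_
  by_contra hkA
  exact hk (Set.mem_biUnion (Set.mem_Iic.2 hm) ⟨hkB, hkA⟩)

theorem eventually_mem_diagIndex (hBA : ∀ n, (B \ A n).Finite) :
    ∀ᶠ k in atTop, k ∈ B → k ∈ A (diagIndex A B k) := by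
  filter_upwards [(tendsto_diagIndex hBA).eventually_ge_atTop 1] with k hk
  exact Nat.findGreatest_of_ne_zero (P := fun n => ∀ m ≤ n, k ∈ B → k ∈ A m) rfl
    (Nat.one_le_iff_ne_zero.1 hk) _ le_rfl

end DiagIndex

theorem tendsto_diag_of_dist_lt {ι α : Type*} [PseudoMetricSpace α] {l : Filter ι}
    {a : ℕ → ι → α} {r : ℕ → α} {L : α} {f : ι → ℕ} (hf : Tendsto f l atTop)
    (hr : Tendsto r atTop (𝓝 L))
    (hclose : ∀ᶠ k in l, dist (a (f k) k) (r (f k)) < 1 / ((f k : ℝ) + 1)) :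
    Tendsto (fun k => a (f k) k) l (𝓝 L) := by
  have hdist : Tendsto (fun k => dist (r (f k)) (a (f k) k)) l (𝓝 0) :=
    squeeze_zero' (Eventually.of_forall fun _ => dist_nonneg)
      (hclose.mono fun _ hk => (dist_comm _ _).trans_le hk.le)
      (tendsto_one_div_add_atTop_nhds_zero_nat.comp hf)
  exact tendsto_of_tendsto_of_dist (hr.comp hf) hdist

theorem stmt18_general (U : Ultrafilter ℕ) (hfree : ∀ A : Set ℕ, A.Finite → A ∉ U)
    (hpp : ∀ A : ℕ → Set ℕ, (∀ n, A n ∈ U) → ∃ B ∈ U, ∀ n, (B \ A n).Finite)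
    (r : ℕ → ℝ) (rlim : ℝ)
    (hrlim : Filter.Tendsto r Filter.atTop (nhds rlim))
    (a : ℕ → ℕ → ℝ)
    (hamono : ∀ n k, a (n + 1) k ≤ a n k)
    (haU : ∀ n, Filter.Tendsto (fun k => a n k) (U : Filter ℕ) (nhds (r n))) :
    ∃ nk : ℕ → ℕ, Filter.Tendsto nk Filter.atTop Filter.atTop ∧
      Filter.Tendsto (fun k => a (nk k) k) (U : Filter ℕ) (nhds rlim) ∧
      ∀ n, ∀ᶠ k in Filter.atTop, a (nk k) k ≤ a n k := by
  have hUat : (U : Filter ℕ) ≤ atTop :=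
    (U.le_cofinite_of_forall_finite_notMem hfree).trans_eq Nat.cofinite_eq_atTop
  set A : ℕ → Set ℕ := fun n => {k | dist (a n k) (r n) < 1 / ((n : ℝ) + 1)}
  obtain ⟨B, hBU, hBA⟩ := hpp A fun n => Metric.tendsto_nhds.1 (haU n) _ Nat.one_div_pos_of_nat
  have hnk := tendsto_diagIndex hBA
  refine ⟨diagIndex A B, hnk, ?_, fun n => ?_⟩
  · refine tendsto_diag_of_dist_lt (hnk.mono_left hUat) hrlim ?_
    filter_upwards [hUat (eventually_mem_diagIndex hBA), hBU] with k hk hkB using hk hkB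
  · filter_upwards [hnk.eventually_ge_atTop n] with k hk
    exact antitone_nat_of_succ_le (f := (a · k)) (fun m => hamono m k) hk

theorem stmt18 (U : Ultrafilter ℕ) (hfree : ∀ A : Set ℕ, A.Finite → A ∉ U)
    (hpp : ∀ A : ℕ → Set ℕ, (∀ n, A n ∈ U) → ∃ B ∈ U, ∀ n, (B \ A n).Finite)
    (r : ℕ → ℝ) (rlim : ℝ) (hrmono : Antitone r)
    (hrlim : Filter.Tendsto r Filter.atTop (nhds rlim))
    (a : ℕ → ℕ → ℝ) (ha01 : ∀ n k, a n k ∈ Set.Icc (0 : ℝ) 1)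
    (hamono : ∀ n k, a (n + 1) k ≤ a n k)
    (haU : ∀ n, Filter.Tendsto (fun k => a n k) (U : Filter ℕ) (nhds (r n))) :
    ∃ nk : ℕ → ℕ, Filter.Tendsto nk Filter.atTop Filter.atTop ∧
      Filter.Tendsto (fun k => a (nk k) k) (U : Filter ℕ) (nhds rlim) ∧
      ∀ n, ∀ᶠ k in Filter.atTop, a (nk k) k ≤ a n k :=
  stmt18_general U hfree hpp r rlim hrlim a hamono haU
end
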